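/- arXiv:2202.05536 — 12 statements merged into one kernel-verified Lean document; each statement's English description precedes it below -/
import Mathlib

section
/- Let (U₁, U₂) be an acyclic split of an implicational base I, i.e., among cross implications, every implication A → b of I with A ⊆ U₁ and b ∈ U₂ may occur, but no implication has its premise in U₂ and conclusion in U₁. Then for every model C₁ of I[U₁], the closure cl(C₁) of C₁ under I satisfies cl(C₁) ∩ U₁ = C₁; hence the trace of the closure system of I on U₁ equals the closure system of I[U₁]. -/
open Finset

variable {α : Type*} [DecidableEq α]

/-- `C` is a model (closed set) of the implicational base `I`. -/
def IsModel (I : Finset (Finset α × α)) (C : Finset α) : Prop :=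
  ∀ p ∈ I, p.1 ⊆ C → p.2 ∈ C

/-- The restriction `I[X]` of an implicational base to `X`. -/
def restrictIB (I : Finset (Finset α × α)) (X : Finset α) : Finset (Finset α × α) :=
  I.filter (fun p => p.1 ⊆ X ∧ p.2 ∈ X)

/-- `I` is an implicational base over ground set `U`: premises are nonempty
and all elements lie in `U`. -/
def BaseOver (I : Finset (Finset α × α)) (U : Finset α) : Prop :=
  ∀ p ∈ I, p.1 ⊆ U ∧ p.2 ∈ U ∧ p.1.Nonempty

/-- `(U₁, U₂)` is a split of `I` over `U`. -/
def IsSplit (I : Finset (Finset α × α)) (U U₁ U₂ : Finset α) : Prop :=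
  U₁ ∪ U₂ = U ∧ Disjoint U₁ U₂ ∧ U₁.Nonempty ∧ U₂.Nonempty ∧
  ∀ p ∈ I, p.1 ⊆ U₁ ∨ p.1 ⊆ U₂

/-- An acyclic split: every cross implication has its premise in `U₁`. -/
def IsAcyclicSplit (I : Finset (Finset α × α)) (U U₁ U₂ : Finset α) : Prop :=
  IsSplit I U U₁ U₂ ∧
  ∀ p ∈ I, ¬ (p.1 ⊆ U₁ ∧ p.2 ∈ U₁) → ¬ (p.1 ⊆ U₂ ∧ p.2 ∈ U₂) → p.1 ⊆ U₁

/-- Two elements lie together in the premise of some implication. -/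
def PremiseStep (I : Finset (Finset α × α)) (u v : α) : Prop :=
  ∃ p ∈ I, u ∈ p.1 ∧ v ∈ p.1

/-- Every pair of elements of `S` is joined by a premise-path. -/
def PremiseConnectedOn (I : Finset (Finset α × α)) (S : Finset α) : Prop :=
  ∀ u ∈ S, ∀ v ∈ S, Relation.ReflTransGen (PremiseStep I) u v

/-- `C` is a premise-connected component of `I` over `U`. -/
def IsComponent (I : Finset (Finset α × α)) (U C : Finset α) : Prop :=
  C ⊆ U ∧ PremiseConnectedOn I C ∧
  ∀ C' : Finset α, C ⊆ C' → C' ⊆ U → PremiseConnectedOn I C' → C' = C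

/-- The closure system (family of models included in `U`) of `I`. -/
def Fam (I : Finset (Finset α × α)) (U : Finset α) : Set (Finset α) :=
  {C | C ⊆ U ∧ IsModel I C}

/-- `M` is meet-irreducible in the closure system `F` with top `U`. -/
def MeetIrred (F : Set (Finset α)) (U M : Finset α) : Prop :=
  M ∈ F ∧ M ≠ U ∧ ∀ A ∈ F, ∀ B ∈ F, M = A ∩ B → M = A ∨ M = B


lemma union_model {α : Type*} [DecidableEq α] (I : Finset (Finset α × α)) (U U₁ U₂ : Finset α)
    (hI : BaseOver I U) (h : IsAcyclicSplit I U U₁ U₂)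
    (C₁ : Finset α) (hC₁ : C₁ ⊆ U₁) (hM : IsModel (restrictIB I U₁) C₁) :
    IsModel I (C₁ ∪ U₂) := by
  obtain ⟨⟨hUeq, hdisj, _, _, hsplit⟩, hacyc⟩ := h
  intro p hp hsub
  obtain ⟨hpU, hp2U, hpne⟩ := hI p hp
  rcases hsplit p hp with h1 | h2
  · have hprem : p.1 ⊆ C₁ := by
      intro x hx
      rcases Finset.mem_union.mp (hsub hx) with hx1 | hx2
      · exact hx1
      · exact absurd (hdisj.forall_ne_finset (h1 hx) hx2) (by simp)
    by_cases h2U₁ : p.2 ∈ U₁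
    · have hpr : p ∈ restrictIB I U₁ := by
        simp [restrictIB, hp, h1, h2U₁]
      exact Finset.mem_union.mpr (Or.inl (hM p hpr hprem))
    · have : p.2 ∈ U₁ ∪ U₂ := by rw [hUeq]; exact hp2U
      rcases Finset.mem_union.mp this with h' | h'
      · exact absurd h' h2U₁
      · exact Finset.mem_union.mpr (Or.inr h')
  · have hnot1 : ¬ (p.1 ⊆ U₁ ∧ p.2 ∈ U₁) := by
      rintro ⟨hs1, -⟩
      obtain ⟨x, hx⟩ := hpne
      exact absurd (hdisj.forall_ne_finset (hs1 hx) (h2 hx)) (by simp)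
    by_cases h2U₂ : p.2 ∈ U₂
    · exact Finset.mem_union.mpr (Or.inr h2U₂)
    · have hnot2 : ¬ (p.1 ⊆ U₂ ∧ p.2 ∈ U₂) := fun ⟨_, hc⟩ => h2U₂ hc
      have hs1 := hacyc p hp hnot1 hnot2
      exact absurd hs1 (fun hs1 => hnot1 ⟨hs1, by
        obtain ⟨x, hx⟩ := hpne
        exact absurd (hdisj.forall_ne_finset (hs1 hx) (h2 hx)) (by simp)⟩)

lemma union_inter_eq {α : Type*} [DecidableEq α] (U₁ U₂ C₁ : Finset α)
    (hdisj : Disjoint U₁ U₂) (hC₁ : C₁ ⊆ U₁) : (C₁ ∪ U₂) ∩ U₁ = C₁ := by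
  ext x
  simp only [Finset.mem_inter, Finset.mem_union]
  constructor
  · rintro ⟨h1 | h2, hx1⟩
    · exact h1
    · exact absurd (hdisj.forall_ne_finset hx1 h2) (by simp)
  · intro hx
    exact ⟨Or.inl hx, hC₁ hx⟩

/-- for an acyclic split, the closure under `I` of a model of
`I[U₁]` traces back to itself on `U₁`; hence the trace of the closure system
of `I` on `U₁` is the closure system of `I[U₁]`. -/
theorem acyclic_split_trace (I : Finset (Finset α × α)) (U U₁ U₂ : Finset α)
    (hI : BaseOver I U) (h : IsAcyclicSplit I U U₁ U₂) :
    (∀ C₁ ⊆ U₁, IsModel (restrictIB I U₁) C₁ →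
      ∀ D : Finset α,
        (IsModel I D ∧ C₁ ⊆ D ∧ D ⊆ U ∧
          ∀ D' : Finset α, IsModel I D' → C₁ ⊆ D' → D' ⊆ U → D ⊆ D') →
        D ∩ U₁ = C₁) ∧
    {C₁ : Finset α | C₁ ⊆ U₁ ∧ IsModel (restrictIB I U₁) C₁} =
      (fun C => C ∩ U₁) '' Fam I U := by
  obtain ⟨⟨hUeq, hdisj, hn1, hn2, hsplit⟩, hacyc⟩ := h
  have hU₂U : U₂ ⊆ U := hUeq ▸ Finset.subset_union_right
  constructor
  · intro C₁ hC₁ hM D ⟨hDM, hCD, hDU, hmin⟩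
    have hE : IsModel I (C₁ ∪ U₂) := union_model I U U₁ U₂ hI ⟨⟨hUeq, hdisj, hn1, hn2, hsplit⟩, hacyc⟩ C₁ hC₁ hM
    have hDE : D ⊆ C₁ ∪ U₂ := hmin _ hE Finset.subset_union_left
      (Finset.union_subset (hC₁.trans (hUeq ▸ Finset.subset_union_left)) hU₂U)
    apply Finset.Subset.antisymm
    · intro x hx
      obtain ⟨hxD, hxU₁⟩ := Finset.mem_inter.mp hx
      have := union_inter_eq U₁ U₂ C₁ hdisj hC₁
      rw [← this]
      exact Finset.mem_inter.mpr ⟨hDE hxD, hxU₁⟩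
    · intro x hx
      exact Finset.mem_inter.mpr ⟨hCD hx, hC₁ hx⟩
  · ext C₁
    simp only [Set.mem_setOf_eq, Set.mem_image]
    constructor
    · rintro ⟨hC₁, hM⟩
      refine ⟨C₁ ∪ U₂, ⟨Finset.union_subset (hC₁.trans (hUeq ▸ Finset.subset_union_left)) hU₂U,
        union_model I U U₁ U₂ hI ⟨⟨hUeq, hdisj, hn1, hn2, hsplit⟩, hacyc⟩ C₁ hC₁ hM⟩, ?_⟩
      exact union_inter_eq U₁ U₂ C₁ hdisj hC₁
    · rintro ⟨C, ⟨hCU, hCM⟩, rfl⟩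
      refine ⟨Finset.inter_subset_right, ?_⟩
      intro p hp hsub
      simp only [restrictIB, Finset.mem_filter] at hp
      obtain ⟨hpI, hp1, hp2⟩ := hp
      exact Finset.mem_inter.mpr ⟨hCM p hpI (hsub.trans Finset.inter_subset_left), hp2⟩
end

section
/- Let (U₁, U₂) be an acyclic split of an implicational base I, let C₂ be a model of I[U₂] and C₁ ⊆ U₁. Then C₁ ∪ C₂ is a model of I if and only if C₁ is a model of I[U₁] and for every implication A → b in the bipartite part I[U₁,U₂], A ⊆ C₁ implies b ∈ C₂. -/
open Finset

variable {α : Type*} [DecidableEq α]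

/-- characterization of extensions for an acyclic split. -/
theorem acyclic_split_extension_charac
    (I : Finset (Finset α × α)) (U U₁ U₂ : Finset α)
    (hI : BaseOver I U) (h : IsAcyclicSplit I U U₁ U₂)
    (C₂ : Finset α) (hC₂U : C₂ ⊆ U₂) (hC₂ : IsModel (restrictIB I U₂) C₂)
    (C₁ : Finset α) (hC₁U : C₁ ⊆ U₁) :
    IsModel I (C₁ ∪ C₂) ↔
      IsModel (restrictIB I U₁) C₁ ∧
      ∀ p ∈ I, p ∉ restrictIB I U₁ → p ∉ restrictIB I U₂ →
        p.1 ⊆ C₁ → p.2 ∈ C₂ := by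
  obtain ⟨⟨hU, hdisj, _, _, hsplit⟩, hac⟩ := h
  constructor
  · intro hm
    constructor
    · intro p hp hsub
      simp only [restrictIB, mem_filter] at hp
      obtain ⟨hpI, h1, h2⟩ := hp
      have := hm p hpI (hsub.trans subset_union_left)
      rcases mem_union.mp this with h' | h'
      · exact h'
      · exact absurd h2 (Finset.disjoint_left.mp hdisj.symm (hC₂U h'))
    · intro p hpI hn1 hn2 hsub
      simp only [restrictIB, mem_filter, hpI, true_and, not_and] at hn1 hn2
      have hp1 : p.1 ⊆ U₁ := hac p hpI (fun ⟨a,b⟩ => hn1 a b) (fun ⟨a,b⟩ => hn2 a b)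
      have h2 : p.2 ∉ U₁ := hn1 hp1
      have := hm p hpI (hsub.trans subset_union_left)
      rcases mem_union.mp this with h' | h'
      · exact absurd (hC₁U h') h2
      · exact h'
  · rintro ⟨hm1, hm2⟩ p hpI hsub
    have hne := (hI p hpI).2.2
    have hU2 : p.2 ∈ U := (hI p hpI).2.1
    rcases hsplit p hpI with hp1 | hp1
    · have hsC1 : p.1 ⊆ C₁ := by
        intro x hx
        rcases mem_union.mp (hsub hx) with h' | h'
        · exact h'
        · exact absurd (hC₂U h') (Finset.disjoint_left.mp hdisj (hp1 hx))
      by_cases h2 : p.2 ∈ U₁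
      · have : p ∈ restrictIB I U₁ := by
          simp [restrictIB, hpI, hp1, h2]
        exact mem_union_left _ (hm1 p this hsC1)
      · have hn1 : p ∉ restrictIB I U₁ := by
          simp [restrictIB, hpI, hp1, h2]
        have hn2 : p ∉ restrictIB I U₂ := by
          simp only [restrictIB, mem_filter, hpI, true_and, not_and]
          intro hs
          obtain ⟨x, hx⟩ := hne
          exact absurd (hs hx) (Finset.disjoint_left.mp hdisj (hp1 hx))
        exact mem_union_right _ (hm2 p hpI hn1 hn2 hsC1)
    · have hnU1 : ¬ p.1 ⊆ U₁ := by
        intro hs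
        obtain ⟨x, hx⟩ := hne
        exact absurd (hp1 hx) (Finset.disjoint_left.mp hdisj (hs hx))
      have h2 : p.2 ∈ U₂ := by
        by_contra h2
        exact hnU1 (hac p hpI (fun ⟨a,_⟩ => hnU1 a) (fun ⟨_,b⟩ => h2 b))
      have hsC2 : p.1 ⊆ C₂ := by
        intro x hx
        rcases mem_union.mp (hsub hx) with h' | h'
        · exact absurd (hC₁U h') (Finset.disjoint_left.mp hdisj.symm (hp1 hx))
        · exact h'
      have : p ∈ restrictIB I U₂ := by simp [restrictIB, hpI, hp1, h2]
      exact mem_union_right _ (hC₂ p this hsC2)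
end

section
/- Let (U₁, U₂) be an acyclic split of an implicational base I. If C₁ is a model of I[U₁], C₂ a model of I[U₂], and C₁ ∪ C₂ is a model of I, then for every model C₁' of I[U₁] with C₁' ⊆ C₁, the set C₁' ∪ C₂ is also a model of I. (Extensions of C₂ form an ideal of the closure system of I[U₁].) -/
open Finset

variable {α : Type*} [DecidableEq α]

/-- extensions of `C₂` form an ideal of the closure system of
`I[U₁]`. -/
theorem acyclic_split_extensions_ideal
    (I : Finset (Finset α × α)) (U U₁ U₂ : Finset α)
    (hI : BaseOver I U) (h : IsAcyclicSplit I U U₁ U₂)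
    (C₁ C₂ : Finset α)
    (hC₁U : C₁ ⊆ U₁) (hC₁ : IsModel (restrictIB I U₁) C₁)
    (hC₂U : C₂ ⊆ U₂) (hC₂ : IsModel (restrictIB I U₂) C₂)
    (hC : IsModel I (C₁ ∪ C₂)) :
    ∀ C₁' ⊆ C₁, IsModel (restrictIB I U₁) C₁' → IsModel I (C₁' ∪ C₂) := by
  intro C₁' hsub hC₁' p hp hprem
  obtain ⟨hsplit, hacy⟩ := h
  obtain ⟨hUnion, hdisj, _, _, hprem12⟩ := hsplit
  obtain ⟨hpU, hp2U, hpne⟩ := hI p hp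
  have hC₁'U : C₁' ⊆ U₁ := hsub.trans hC₁U
  rcases hprem12 p hp with h1 | h2
  · -- premise ⊆ U₁, hence premise ⊆ C₁'
    have hpC₁' : p.1 ⊆ C₁' := by
      intro x hx
      rcases mem_union.mp (hprem hx) with hx1 | hx2
      · exact hx1
      · exact absurd (h1 hx) (disjoint_left.mp hdisj.symm (hC₂U hx2))
    by_cases h2U1 : p.2 ∈ U₁
    · exact mem_union_left _ (hC₁' p (mem_filter.mpr ⟨hp, h1, h2U1⟩) hpC₁')
    · have h2U2 : p.2 ∈ U₂ := by
        have := hp2U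
        rw [← hUnion] at this
        rcases mem_union.mp this with h' | h'
        · exact absurd h' h2U1
        · exact h'
      have : p.2 ∈ C₁ ∪ C₂ := hC p hp (fun x hx => mem_union_left _ (hsub (hpC₁' hx)))
      rcases mem_union.mp this with h' | h'
      · exact absurd (hC₁U h') (disjoint_left.mp hdisj.symm h2U2)
      · exact mem_union_right _ h'
  · -- premise ⊆ U₂, hence premise ⊆ C₂
    have hpC₂ : p.1 ⊆ C₂ := by
      intro x hx
      rcases mem_union.mp (hprem hx) with hx1 | hx2
      · exact absurd (h2 hx) (disjoint_left.mp hdisj (hC₁'U hx1))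
      · exact hx2
    by_cases h2U2 : p.2 ∈ U₂
    · exact mem_union_right _ (hC₂ p (mem_filter.mpr ⟨hp, h2, h2U2⟩) hpC₂)
    · exfalso
      obtain ⟨x, hx⟩ := hpne
      have hU1 : p.1 ⊆ U₁ := by
        apply hacy p hp
        · rintro ⟨ha, _⟩
          exact disjoint_left.mp hdisj (ha hx) (h2 hx)
        · rintro ⟨_, hb⟩
          exact h2U2 hb
      exact disjoint_left.mp hdisj (hU1 hx) (h2 hx)
end

section
/- Let (U₁, U₂) be an acyclic split of an implicational base I. If C₂ ⊆ C₂' are two models of I[U₂] and C₁ ⊆ U₁ is such that C₁ ∪ C₂ is a model of I, then C₁ ∪ C₂' is also a model of I. (Extensions are increasing along the closure system of I[U₂].) -/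
open Finset

variable {α : Type*} [DecidableEq α]

/-- extensions are increasing along the closure system of
`I[U₂]`. -/
theorem acyclic_split_extensions_increasing
    (I : Finset (Finset α × α)) (U U₁ U₂ : Finset α)
    (hI : BaseOver I U) (h : IsAcyclicSplit I U U₁ U₂)
    (C₂ C₂' : Finset α) (hsub : C₂ ⊆ C₂')
    (hC₂U : C₂ ⊆ U₂) (hC₂ : IsModel (restrictIB I U₂) C₂)
    (hC₂'U : C₂' ⊆ U₂) (hC₂' : IsModel (restrictIB I U₂) C₂')
    (C₁ : Finset α) (hC₁U : C₁ ⊆ U₁)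
    (hC : IsModel I (C₁ ∪ C₂)) :
    IsModel I (C₁ ∪ C₂') := by
  obtain ⟨⟨-, hdisj, -, -, hsplit⟩, hacyc⟩ := h
  intro p hp hpsub
  rcases hsplit p hp with h1 | h2
  · -- premise ⊆ U₁, hence ⊆ C₁
    have hpc1 : p.1 ⊆ C₁ := by
      intro x hx
      rcases Finset.mem_union.mp (hpsub hx) with hx1 | hx2
      · exact hx1
      · exact absurd (h1 hx) (Finset.disjoint_right.mp hdisj (hC₂'U hx2))
    have : p.2 ∈ C₁ ∪ C₂ := hC p hp (hpc1.trans Finset.subset_union_left)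
    exact Finset.union_subset_union_right hsub this
  · -- premise ⊆ U₂, hence ⊆ C₂'
    have hpc2 : p.1 ⊆ C₂' := by
      intro x hx
      rcases Finset.mem_union.mp (hpsub hx) with hx1 | hx2
      · exact absurd (h2 hx) (Finset.disjoint_left.mp hdisj (hC₁U hx1))
      · exact hx2
    by_cases h2b : p.2 ∈ U₂
    · have hpr : p ∈ restrictIB I U₂ := by
        simp [restrictIB, hp, h2, h2b]
      exact Finset.mem_union_right _ (hC₂' p hpr hpc2)
    · exfalso
      obtain ⟨x, hx⟩ := (hI p hp).2.2
      have hxU1 : x ∈ U₁ := by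
        refine hacyc p hp (fun ⟨hs1, _⟩ => ?_) (fun ⟨_, h2c⟩ => h2b h2c) hx
        exact Finset.disjoint_left.mp hdisj (hs1 hx) (h2 hx)
      exact Finset.disjoint_left.mp hdisj hxU1 (h2 hx)
end

section
/- Let (U₁, U₂) be an acyclic split of an implicational base I with closure system F. If C₂, C₂' are models of I[U₂] with C₂ covered by C₂' in the closure system of I[U₂], and C₁ is a model of I[U₁] with C₁ ∪ C₂ ∈ F, then C₁ ∪ C₂ is covered by C₁ ∪ C₂' in F (i.e., no C ∈ F satisfies C₁ ∪ C₂ ⊊ C ⊊ C₁ ∪ C₂'). -/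
open Finset

variable {α : Type*} [DecidableEq α]

/-- `B` covers `A` in the closure system `F`. -/
def CoversIn (F : Set (Finset α)) (A B : Finset α) : Prop :=
  A ∈ F ∧ B ∈ F ∧ A ⊂ B ∧ ∀ C ∈ F, A ⊂ C → C ⊆ B → C = B

/-- covers lift along extensions in an acyclic split. -/
theorem acyclic_split_covers_lift
    (I : Finset (Finset α × α)) (U U₁ U₂ : Finset α)
    (hI : BaseOver I U) (h : IsAcyclicSplit I U U₁ U₂)
    (C₂ C₂' : Finset α)
    (hcov : CoversIn (Fam (restrictIB I U₂) U₂) C₂ C₂')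
    (C₁ : Finset α) (hC₁U : C₁ ⊆ U₁) (hC₁ : IsModel (restrictIB I U₁) C₁)
    (hC : C₁ ∪ C₂ ∈ Fam I U) :
    CoversIn (Fam I U) (C₁ ∪ C₂) (C₁ ∪ C₂') := by
  obtain ⟨⟨hU, hdisj, -, -, hprem⟩, hacy⟩ := h
  subst hU
  obtain ⟨⟨hC₂U, hC₂M⟩, ⟨hC₂'U, hC₂'M⟩, hss, hmax⟩ := hcov
  obtain ⟨hCU, hCM⟩ := hC
  have hdisj' : ∀ x ∈ U₂, x ∉ C₁ := fun x hx hxC =>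
    (Finset.disjoint_left.mp hdisj (hC₁U hxC)) hx
  -- membership of C₁ ∪ C₂' in Fam I U
  have hmem' : C₁ ∪ C₂' ∈ Fam I (U₁ ∪ U₂) := by
    constructor
    · exact Finset.union_subset (hC₁U.trans Finset.subset_union_left)
        (hC₂'U.trans Finset.subset_union_right)
    · intro p hp hsub
      by_cases h1 : p.1 ⊆ U₁ ∧ p.2 ∈ U₁
      · have hp1 : p.1 ⊆ C₁ := by
          intro x hx
          rcases Finset.mem_union.mp (hsub hx) with hxc | hxc
          · exact hxc
          · exact absurd (h1.1 hx) (Finset.disjoint_right.mp hdisj (hC₂'U hxc))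
        exact Finset.mem_union_left _ (hC₁ p (Finset.mem_filter.mpr ⟨hp, h1⟩) hp1)
      · by_cases h2 : p.1 ⊆ U₂ ∧ p.2 ∈ U₂
        · have hp1 : p.1 ⊆ C₂' := by
            intro x hx
            rcases Finset.mem_union.mp (hsub hx) with hxc | hxc
            · exact absurd (h2.1 hx) (Finset.disjoint_left.mp hdisj (hC₁U hxc))
            · exact hxc
          exact Finset.mem_union_right _ (hC₂'M p (Finset.mem_filter.mpr ⟨hp, h2⟩) hp1)
        · have hp1 : p.1 ⊆ U₁ := hacy p hp h1 h2
          have hp1C : p.1 ⊆ C₁ := by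
            intro x hx
            rcases Finset.mem_union.mp (hsub hx) with hxc | hxc
            · exact hxc
            · exact absurd (hp1 hx) (Finset.disjoint_right.mp hdisj (hC₂'U hxc))
          have h3 : p.2 ∈ C₁ ∪ C₂ := hCM p hp (hp1C.trans Finset.subset_union_left)
          rcases Finset.mem_union.mp h3 with h | h
          · exact Finset.mem_union_left _ h
          · exact Finset.mem_union_right _ (hss.1 h)
  refine ⟨⟨hCU, hCM⟩, hmem', ?_, ?_⟩
  · constructor
    · exact Finset.union_subset_union_right hss.1
    · intro hrev
      obtain ⟨x, hx2', hx2⟩ := Finset.not_subset.mp (fun hsub => hss.2 hsub)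
      have : x ∈ C₁ ∪ C₂ := hrev (Finset.mem_union_right _ hx2')
      rcases Finset.mem_union.mp this with hh | hh
      · exact hdisj' x (hC₂'U hx2') hh
      · exact hx2 hh
  · intro C hCmem hsub1 hsub2
    obtain ⟨hCU', hCM'⟩ := hCmem
    have hD2M : IsModel (restrictIB I U₂) (C ∩ U₂) := by
      intro p hp hsub
      have hp' := Finset.mem_filter.mp hp
      exact Finset.mem_inter.mpr ⟨hCM' p hp'.1 (hsub.trans Finset.inter_subset_left), hp'.2.2⟩
    have hC2sub : C₂ ⊆ C ∩ U₂ := fun x hx =>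
      Finset.mem_inter.mpr ⟨hsub1.1 (Finset.mem_union_right _ hx), hC₂U hx⟩
    have hD2sub : C ∩ U₂ ⊆ C₂' := by
      intro x hx
      obtain ⟨hxC, hxU2⟩ := Finset.mem_inter.mp hx
      rcases Finset.mem_union.mp (hsub2 hxC) with hh | hh
      · exact absurd hh (hdisj' x hxU2)
      · exact hh
    have hCeq : C = C₁ ∪ (C ∩ U₂) := by
      apply Finset.Subset.antisymm
      · intro x hx
        rcases Finset.mem_union.mp (hsub2 hx) with hh | hh
        · exact Finset.mem_union_left _ hh
        · exact Finset.mem_union_right _ (Finset.mem_inter.mpr ⟨hx, hC₂'U hh⟩)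
      · exact Finset.union_subset
          (fun x hx => hsub1.1 (Finset.mem_union_left _ hx))
          Finset.inter_subset_left
    have hne : C ∩ U₂ ≠ C₂ := by
      intro heq
      apply hsub1.2
      rw [hCeq, heq]
    have hfin : C ∩ U₂ = C₂' := hmax (C ∩ U₂) ⟨Finset.inter_subset_right, hD2M⟩
      ⟨hC2sub, fun hrev => hne (Finset.Subset.antisymm hrev hC2sub)⟩ hD2sub
    rw [hCeq, hfin]
end

section
/- Let (U₁, U₂) be an acyclic split of an implicational base I with closure system F, and let F₂ be the closure system of I[U₂]. If C₂ ∈ F₂ with C₂ ≠ U₂ and C₁ ∪ C₂ ∈ F is a non-maximal extension of C₂ (i.e., there exists C₁' ⊋ C₁ with C₁' ∪ C₂ ∈ F), then C₁ ∪ C₂ is not meet-irreducible in F. -/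
open Finset

variable {α : Type*} [DecidableEq α]

/-- a non-maximal extension of `C₂ ≠ U₂` is not
meet-irreducible. -/
theorem nonmaximal_extension_not_meetIrred
    (I : Finset (Finset α × α)) (U U₁ U₂ : Finset α)
    (hI : BaseOver I U) (h : IsAcyclicSplit I U U₁ U₂)
    (C₂ : Finset α) (hC₂ : C₂ ∈ Fam (restrictIB I U₂) U₂) (hne : C₂ ≠ U₂)
    (C₁ : Finset α) (hC₁U : C₁ ⊆ U₁)
    (hmem : C₁ ∪ C₂ ∈ Fam I U)
    (hnonmax : ∃ C₁' : Finset α, C₁ ⊂ C₁' ∧ C₁' ⊆ U₁ ∧ C₁' ∪ C₂ ∈ Fam I U) :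
    ¬ MeetIrred (Fam I U) U (C₁ ∪ C₂) := by
  obtain ⟨C₁', hlt, hC₁'U, hA⟩ := hnonmax
  obtain ⟨⟨hUU, hdisj, _, _, hsplit⟩, hacy⟩ := h
  obtain ⟨hC₂U, _⟩ := hC₂
  intro ⟨_, _, hirr⟩
  -- B = C₁ ∪ U₂ is a model
  have hBU : C₁ ∪ U₂ ⊆ U := by
    rw [← hUU]; exact union_subset_union hC₁U (Subset.refl _)
  have hBmodel : IsModel I (C₁ ∪ U₂) := by
    intro p hp hsub
    rcases hsplit p hp with h1 | h2
    · -- premise in U₁, hence in C₁, hence conclusion in M ⊆ B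
      have hpC₁ : p.1 ⊆ C₁ := by
        intro x hx
        rcases mem_union.1 (hsub hx) with hx1 | hx2
        · exact hx1
        · exact absurd hx2 (disjoint_left.1 hdisj (h1 hx))
      have := hmem.2 p hp (hpC₁.trans subset_union_left)
      rcases mem_union.1 this with h | h
      · exact mem_union_left _ h
      · exact mem_union_right _ (hC₂U h)
    · -- premise in U₂; conclusion must be in U₂ by acyclicity
      by_cases hc : p.2 ∈ U₂
      · exact mem_union_right _ hc
      · exfalso
        obtain ⟨x, hx⟩ := (hI p hp).2.2
        have hxU1 : x ∉ U₁ := disjoint_right.1 hdisj (h2 hx)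
        have := hacy p hp (fun ⟨hp1, _⟩ => hxU1 (hp1 hx))
          (fun ⟨_, hp2⟩ => hc hp2)
        exact hxU1 (this hx)
  have hB : C₁ ∪ U₂ ∈ Fam I U := ⟨hBU, hBmodel⟩
  -- M = A ∩ B
  have hdisj12 : Disjoint C₁' C₂ := hdisj.mono hC₁'U hC₂U
  have hdisj21 : Disjoint C₂ C₁ := (hdisj.mono hC₁U hC₂U).symm
  have hMAB : C₁ ∪ C₂ = (C₁' ∪ C₂) ∩ (C₁ ∪ U₂) := by
    ext x
    simp only [mem_inter, mem_union]
    constructor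
    · rintro (h | h)
      · exact ⟨Or.inl (hlt.1 h), Or.inl h⟩
      · exact ⟨Or.inr h, Or.inr (hC₂U h)⟩
    · rintro ⟨h1 | h1, h2 | h2⟩
      · exact Or.inl h2
      · exact absurd (hC₁'U h1) (disjoint_right.1 hdisj h2)
      · exact absurd (hC₂U h1) (disjoint_left.1 hdisj (hC₁U h2))
      · exact Or.inr h1
  rcases hirr _ hA _ hB hMAB with heq | heq
  · -- C₁ ∪ C₂ = C₁' ∪ C₂ contradicts C₁ ⊂ C₁'
    obtain ⟨x, hx', hx⟩ := exists_of_ssubset hlt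
    have hxM : x ∈ C₁ ∪ C₂ := heq ▸ mem_union_left _ hx'
    rcases mem_union.1 hxM with h | h
    · exact hx h
    · exact disjoint_left.1 hdisj12 hx' h
  · -- C₁ ∪ C₂ = C₁ ∪ U₂ contradicts C₂ ≠ U₂
    apply hne
    apply Subset.antisymm hC₂U
    intro x hx
    have hxM : x ∈ C₁ ∪ C₂ := heq ▸ mem_union_right _ hx
    rcases mem_union.1 hxM with h | h
    · exact absurd (hC₁U h) (disjoint_right.1 hdisj hx)
    · exact h
end

section
/- Let (U₁, U₂) be an acyclic split of an implicational base I with closure system F, and F₂ the closure system of I[U₂]. If C₂ ∈ F₂ satisfies C₂ ≠ U₂ and C₂ is not meet-irreducible in F₂, then no extension of C₂ is meet-irreducible in F. -/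
open Finset

variable {α : Type*} [DecidableEq α]

/-- extensions of a non-meet-irreducible `C₂ ≠ U₂` are never
meet-irreducible. -/
theorem extension_of_not_meetIrred_not_meetIrred
    (I : Finset (Finset α × α)) (U U₁ U₂ : Finset α)
    (hI : BaseOver I U) (h : IsAcyclicSplit I U U₁ U₂)
    (C₂ : Finset α) (hC₂ : C₂ ∈ Fam (restrictIB I U₂) U₂) (hne : C₂ ≠ U₂)
    (hni : ¬ MeetIrred (Fam (restrictIB I U₂) U₂) U₂ C₂) :
    ∀ C ∈ Fam I U, C ∩ U₂ = C₂ → ¬ MeetIrred (Fam I U) U C := by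
  intro C hC hext hM
  obtain ⟨hCU, hCmod⟩ := hC
  obtain ⟨hU, hdisj, _, _, _⟩ := h.1
  have hU2 : U₂ ⊆ U := hU ▸ Finset.subset_union_right
  -- extract the witnesses of non-meet-irreducibility
  have hex : ∃ A ∈ Fam (restrictIB I U₂) U₂, ∃ B ∈ Fam (restrictIB I U₂) U₂,
      C₂ = A ∩ B ∧ C₂ ≠ A ∧ C₂ ≠ B := by
    by_contra hcon
    push_neg at hcon
    refine hni ⟨hC₂, hne, fun A hA B hB hAB => ?_⟩
    by_cases hca : C₂ = A
    · exact Or.inl hca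
    · exact Or.inr (hcon A hA B hB hAB hca)
  obtain ⟨A, hA, B, hB, hAB, hneA, hneB⟩ := hex
  -- key: union of C with a model of the restriction containing C₂ is a model
  have key : ∀ D : Finset α, D ∈ Fam (restrictIB I U₂) U₂ → C₂ ⊆ D →
      C ∪ D ∈ Fam I U := by
    intro D hD hsub
    obtain ⟨hDU, hDmod⟩ := hD
    refine ⟨Finset.union_subset hCU (hDU.trans hU2), ?_⟩
    intro p hp hpsub
    by_cases hc : p.1 ⊆ U₂ ∧ p.2 ∈ U₂
    · have hpmem : p ∈ restrictIB I U₂ := Finset.mem_filter.mpr ⟨hp, hc⟩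
      have hpd : p.1 ⊆ D := by
        intro x hx
        rcases Finset.mem_union.1 (hpsub hx) with hxc | hxd
        · exact hsub (hext ▸ Finset.mem_inter.2 ⟨hxc, hc.1 hx⟩)
        · exact hxd
      exact Finset.mem_union_right _ (hDmod p hpmem hpd)
    · have hp1 : p.1 ⊆ U₁ := by
        by_cases h1 : p.1 ⊆ U₁ ∧ p.2 ∈ U₁
        · exact h1.1
        · exact h.2 p hp h1 hc
      have hpc : p.1 ⊆ C := by
        intro x hx
        rcases Finset.mem_union.1 (hpsub hx) with hxc | hxd
        · exact hxc
        · exact absurd (hDU hxd) (Finset.disjoint_left.1 hdisj (hp1 hx))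
      exact Finset.mem_union_left _ (hCmod p hp hpc)
  have hC2sub : C₂ ⊆ C := hext ▸ Finset.inter_subset_left
  have hkA := key A ⟨hA.1, hA.2⟩ (hAB ▸ Finset.inter_subset_left)
  have hkB := key B ⟨hB.1, hB.2⟩ (hAB ▸ Finset.inter_subset_right)
  have heq : C = (C ∪ A) ∩ (C ∪ B) := by
    rw [← Finset.union_inter_distrib_left, ← hAB, Finset.union_eq_left.2 hC2sub]
  rcases hM.2.2 (C ∪ A) hkA (C ∪ B) hkB heq with hEq | hEq
  · apply hneA
    have : (C ∪ A) ∩ U₂ = C₂ ∪ A := by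
      rw [Finset.union_inter_distrib_right, hext, Finset.inter_eq_left.2 hA.1]
    rw [← hEq, hext] at this
    rw [this, Finset.union_eq_right.2 (hAB ▸ Finset.inter_subset_left)]
  · apply hneB
    have : (C ∪ B) ∩ U₂ = C₂ ∪ B := by
      rw [Finset.union_inter_distrib_right, hext, Finset.inter_eq_left.2 hB.1]
    rw [← hEq, hext] at this
    rw [this, Finset.union_eq_right.2 (hAB ▸ Finset.inter_subset_right)]
end

section
/- Let (U₁, U₂) be an acyclic split of an implicational base I with closure system F; let F₁ be the closure system of I[U₁], F₂ of I[U₂], and let M, M₁, M₂ denote the meet-irreducible elements of F, F₁, F₂ respectively. Then M = {M₁ ∪ U₂ : M₁ ∈ M₁} ∪ {C : C is a maximal extension of some M₂ ∈ M₂}, and in particular |M| ≥ |M₁| + |M₂|. -/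
open Finset

variable {α : Type*} [DecidableEq α]

/-! With an acyclic split, a set `C ⊆ U` is closed iff `C ∩ U₁` and `C ∩ U₂` are closed for
`I[U₁]` and `I[U₂]` and `C` respects the cross implications, which all run from `U₁` to `U₂`. So
`X ↦ X ∪ U₂` identifies `F₁` with the closed sets containing `U₂`, a meet-closed up-set of `F`, and
the meet-irreducibles containing `U₂` are the `M₁ ∪ U₂`. A meet-irreducible `M` not containing `U₂`
equals `C ∩ (M ∩ U₁ ∪ U₂)` for every larger extension `C` of `M ∩ U₂`, hence `M = C`; and a
splitting `M ∩ U₂ = A₂ ∩ B₂` lifts to `M = (M ∩ U₁ ∪ A₂) ∩ (M ∩ U₁ ∪ B₂)`. Conversely, a splitting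
`C = A ∩ B` of a maximal extension of `M₂` traces to a splitting of `M₂`. The count follows since
the two families are disjoint and every `M₂` has a maximal extension. -/

lemma mem_restrictIB {I : Finset (Finset α × α)} {X : Finset α} {p : Finset α × α} :
    p ∈ restrictIB I X ↔ p ∈ I ∧ p.1 ⊆ X ∧ p.2 ∈ X :=
  mem_filter

omit [DecidableEq α] in
lemma BaseOver.empty_mem_Fam {I : Finset (Finset α × α)} {U : Finset α} (hI : BaseOver I U) :
    ∅ ∈ Fam I U :=
  ⟨empty_subset U, fun p hp hp₁ => absurd (subset_empty.mp hp₁) (hI p hp).2.2.ne_empty⟩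

lemma IsModel.inter_restrictIB {I : Finset (Finset α × α)} {C : Finset α} (hC : IsModel I C)
    (X : Finset α) : IsModel (restrictIB I X) (C ∩ X) := fun p hp hp₁ =>
  mem_inter.mpr ⟨hC p (mem_restrictIB.mp hp).1 (hp₁.trans inter_subset_left),
    (mem_restrictIB.mp hp).2.2⟩

lemma self_mem_Fam_restrictIB (I : Finset (Finset α × α)) (X : Finset α) :
    X ∈ Fam (restrictIB I X) X :=
  ⟨Subset.rfl, fun _ hp _ => (mem_restrictIB.mp hp).2.2⟩

lemma inter_mem_Fam_restrictIB {I : Finset (Finset α × α)} {U C : Finset α} (hC : C ∈ Fam I U)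
    (X : Finset α) : C ∩ X ∈ Fam (restrictIB I X) X :=
  ⟨inter_subset_right, hC.2.inter_restrictIB X⟩

omit [DecidableEq α] in
lemma finite_Fam (I : Finset (Finset α × α)) (U : Finset α) : (Fam I U).Finite :=
  U.powerset.finite_toSet.subset fun _ hC => mem_powerset.mpr hC.1

lemma finite_setOf_meetIrred (I : Finset (Finset α × α)) (U : Finset α) :
    {M | MeetIrred (Fam I U) U M}.Finite :=
  (finite_Fam I U).subset fun _ hM => hM.1

lemma union_inter_eq_left_of_disjoint {S T X Y : Finset α} (hST : Disjoint S T) (hX : X ⊆ S)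
    (hY : Y ⊆ T) : (X ∪ Y) ∩ S = X := by
  rw [union_inter_distrib_right, inter_eq_left.mpr hX,
    disjoint_iff_inter_eq_empty.mp (hST.symm.mono_left hY), union_empty]

lemma union_inter_eq_right_of_disjoint {S T X Y : Finset α} (hST : Disjoint S T) (hX : X ⊆ S)
    (hY : Y ⊆ T) : (X ∪ Y) ∩ T = Y := by
  rw [union_comm]
  exact union_inter_eq_left_of_disjoint hST.symm hY hX

/-- `C` is a maximal extension of the closed set `C₂` of `I[U₂]`. -/
def IsMaxExtension (I : Finset (Finset α × α)) (U U₂ C₂ C : Finset α) : Prop :=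
  C ∈ Fam I U ∧ C ∩ U₂ = C₂ ∧ ∀ C' ∈ Fam I U, C' ∩ U₂ = C₂ → C ⊆ C' → C = C'

section MaxExtension

variable {I : Finset (Finset α × α)} {U U₂ C₂ C : Finset α}

lemma IsMaxExtension.meetIrred (hU₂ : U₂ ⊆ U)
    (hC₂ : MeetIrred (Fam (restrictIB I U₂) U₂) U₂ C₂) (hC : IsMaxExtension I U U₂ C₂ C) :
    MeetIrred (Fam I U) U C := by
  obtain ⟨hCF, hCC₂, hmax⟩ := hC
  obtain ⟨-, hC₂U₂, hirr⟩ := hC₂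
  refine ⟨hCF, ?_, fun A hA B hB hAB => ?_⟩
  · rintro rfl
    rw [← hCC₂, inter_eq_right.mpr hU₂] at hC₂U₂
    exact hC₂U₂ rfl
  · have hC₂AB : C₂ = A ∩ U₂ ∩ (B ∩ U₂) := by rw [← hCC₂, hAB, inter_inter_distrib_right]
    exact (hirr _ (inter_mem_Fam_restrictIB hA U₂) _ (inter_mem_Fam_restrictIB hB U₂) hC₂AB).imp
      (fun hA₂ => hmax A hA hA₂.symm (hAB ▸ inter_subset_left))
      (fun hB₂ => hmax B hB hB₂.symm (hAB ▸ inter_subset_right))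

lemma exists_isMaxExtension (hC₂ : C₂ ⊆ U₂) (hC₂F : C₂ ∈ Fam I U) :
    ∃ C, IsMaxExtension I U U₂ C₂ C := by
  have hfin : {C | C ∈ Fam I U ∧ C ∩ U₂ = C₂}.Finite := (finite_Fam I U).subset fun _ hC => hC.1
  obtain ⟨C, ⟨hCF, hCC₂⟩, hmax⟩ := hfin.exists_maximal ⟨C₂, hC₂F, inter_eq_left.mpr hC₂⟩
  exact ⟨C, hCF, hCC₂, fun C' hC' hC'C₂ hCC' => hCC'.antisymm (hmax ⟨hC', hC'C₂⟩ hCC')⟩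

end MaxExtension

namespace IsAcyclicSplit

variable {I : Finset (Finset α × α)} {U U₁ U₂ : Finset α}

lemma left_subset (h : IsAcyclicSplit I U U₁ U₂) : U₁ ⊆ U := h.1.1 ▸ subset_union_left

lemma right_subset (h : IsAcyclicSplit I U U₁ U₂) : U₂ ⊆ U := h.1.1 ▸ subset_union_right

lemma disjoint (h : IsAcyclicSplit I U U₁ U₂) : Disjoint U₁ U₂ := h.1.2.1

lemma inter_left_union_inter_right (h : IsAcyclicSplit I U U₁ U₂) {C : Finset α} (hC : C ⊆ U) :
    C ∩ U₁ ∪ C ∩ U₂ = C := by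
  rw [← inter_union_distrib_left, h.1.1, inter_eq_left.mpr hC]

lemma inter_left_union_right (h : IsAcyclicSplit I U U₁ U₂) {C : Finset α} (hC : C ⊆ U)
    (hU₂C : U₂ ⊆ C) : C ∩ U₁ ∪ U₂ = C := by
  rw [← inter_eq_right.mpr hU₂C, h.inter_left_union_inter_right hC]

lemma mem_restrictIB_or (hI : BaseOver I U) (h : IsAcyclicSplit I U U₁ U₂) {p : Finset α × α}
    (hp : p ∈ I) :
    p ∈ restrictIB I U₁ ∨ p ∈ restrictIB I U₂ ∨ (p.1 ⊆ U₁ ∧ p.2 ∈ U₂) := by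
  simp only [mem_restrictIB, hp, true_and]
  by_cases h₁ : p.1 ⊆ U₁ ∧ p.2 ∈ U₁
  · exact Or.inl h₁
  by_cases h₂ : p.1 ⊆ U₂ ∧ p.2 ∈ U₂
  · exact Or.inr (Or.inl h₂)
  have hp₁ := h.2 p hp h₁ h₂
  have hp₂ : p.2 ∈ U₁ ∪ U₂ := h.1.1 ▸ (hI p hp).2.1
  exact Or.inr (Or.inr ⟨hp₁, (mem_union.mp hp₂).resolve_left fun h₁' => h₁ ⟨hp₁, h₁'⟩⟩)

lemma union_mem_Fam (hI : BaseOver I U) (h : IsAcyclicSplit I U U₁ U₂) {C₁ C₂ : Finset α}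
    (hC₁ : C₁ ∈ Fam (restrictIB I U₁) U₁) (hC₂ : C₂ ∈ Fam (restrictIB I U₂) U₂)
    (hcross : ∀ p ∈ I, p.1 ⊆ C₁ → p.2 ∈ U₂ → p.2 ∈ C₂) :
    C₁ ∪ C₂ ∈ Fam I U := by
  refine ⟨union_subset (hC₁.1.trans h.left_subset) (hC₂.1.trans h.right_subset),
    fun p hp hpC => ?_⟩
  have hsub₁ : p.1 ⊆ U₁ → p.1 ⊆ C₁ := fun hp₁ =>
    union_inter_eq_left_of_disjoint h.disjoint hC₁.1 hC₂.1 ▸ subset_inter hpC hp₁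
  have hsub₂ : p.1 ⊆ U₂ → p.1 ⊆ C₂ := fun hp₁ =>
    union_inter_eq_right_of_disjoint h.disjoint hC₁.1 hC₂.1 ▸ subset_inter hpC hp₁
  rcases h.mem_restrictIB_or hI hp with hp' | hp' | ⟨hp₁, hp₂⟩
  · exact mem_union_left _ (hC₁.2 p hp' (hsub₁ (mem_restrictIB.mp hp').2.1))
  · exact mem_union_right _ (hC₂.2 p hp' (hsub₂ (mem_restrictIB.mp hp').2.1))
  · exact mem_union_right _ (hcross p hp (hsub₁ hp₁) hp₂)

lemma union_right_mem_Fam (hI : BaseOver I U) (h : IsAcyclicSplit I U U₁ U₂) {C₁ : Finset α}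
    (hC₁ : C₁ ∈ Fam (restrictIB I U₁) U₁) : C₁ ∪ U₂ ∈ Fam I U :=
  h.union_mem_Fam hI hC₁ (self_mem_Fam_restrictIB I U₂) fun _ _ _ hp₂ => hp₂

lemma inter_left_union_mem_Fam (hI : BaseOver I U) (h : IsAcyclicSplit I U U₁ U₂)
    {C A₂ : Finset α} (hC : C ∈ Fam I U) (hA₂ : A₂ ∈ Fam (restrictIB I U₂) U₂)
    (hCA₂ : C ∩ U₂ ⊆ A₂) : C ∩ U₁ ∪ A₂ ∈ Fam I U :=
  h.union_mem_Fam hI (inter_mem_Fam_restrictIB hC U₁) hA₂ fun p hp hp₁ hp₂ =>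
    hCA₂ (mem_inter.mpr ⟨hC.2 p hp (hp₁.trans inter_subset_left), hp₂⟩)

lemma mem_Fam_of_mem_Fam_restrictIB_right (hI : BaseOver I U) (h : IsAcyclicSplit I U U₁ U₂)
    {C₂ : Finset α} (hC₂ : C₂ ∈ Fam (restrictIB I U₂) U₂) : C₂ ∈ Fam I U := by
  simpa using h.inter_left_union_mem_Fam hI hI.empty_mem_Fam hC₂ (by simp)

lemma meetIrred_union_right (hI : BaseOver I U) (h : IsAcyclicSplit I U U₁ U₂) {M₁ : Finset α}
    (hM₁ : MeetIrred (Fam (restrictIB I U₁) U₁) U₁ M₁) : MeetIrred (Fam I U) U (M₁ ∪ U₂) := by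
  obtain ⟨hM₁F, hM₁U₁, hirr⟩ := hM₁
  have hcut := union_inter_eq_left_of_disjoint h.disjoint hM₁F.1 Subset.rfl
  refine ⟨h.union_right_mem_Fam hI hM₁F, fun hU => hM₁U₁ ?_, fun A hA B hB hAB => ?_⟩
  · rw [← hcut, hU, inter_eq_right.mpr h.left_subset]
  · have hM₁AB : M₁ = A ∩ U₁ ∩ (B ∩ U₁) := by rw [← hcut, hAB, inter_inter_distrib_right]
    have hU₂AB : U₂ ⊆ A ∩ B := hAB ▸ subset_union_right
    refine (hirr _ (inter_mem_Fam_restrictIB hA U₁) _ (inter_mem_Fam_restrictIB hB U₁)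
      hM₁AB).imp (fun hA₁ => ?_) (fun hB₁ => ?_)
    · rw [hA₁, h.inter_left_union_right hA.1 (hU₂AB.trans inter_subset_left)]
    · rw [hB₁, h.inter_left_union_right hB.1 (hU₂AB.trans inter_subset_right)]

lemma meetIrred_inter_left (hI : BaseOver I U) (h : IsAcyclicSplit I U U₁ U₂) {M : Finset α}
    (hM : MeetIrred (Fam I U) U M) (hU₂M : U₂ ⊆ M) :
    MeetIrred (Fam (restrictIB I U₁) U₁) U₁ (M ∩ U₁) := by
  obtain ⟨hMF, hMU, hirr⟩ := hM
  have hdec := h.inter_left_union_right hMF.1 hU₂M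
  refine ⟨inter_mem_Fam_restrictIB hMF U₁, fun hU₁ => hMU ?_, fun A hA B hB hAB => ?_⟩
  · rw [← hdec, hU₁, h.1.1]
  · have hMAB : M = (A ∪ U₂) ∩ (B ∪ U₂) := by rw [← inter_union_distrib_right, ← hAB, hdec]
    refine (hirr _ (h.union_right_mem_Fam hI hA) _ (h.union_right_mem_Fam hI hB) hMAB).imp
      (fun hA' => ?_) (fun hB' => ?_)
    · rw [hA', union_inter_eq_left_of_disjoint h.disjoint hA.1 Subset.rfl]
    · rw [hB', union_inter_eq_left_of_disjoint h.disjoint hB.1 Subset.rfl]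

lemma meetIrred_inter_right (hI : BaseOver I U) (h : IsAcyclicSplit I U U₁ U₂) {M : Finset α}
    (hM : MeetIrred (Fam I U) U M) (hU₂M : ¬ U₂ ⊆ M) :
    MeetIrred (Fam (restrictIB I U₂) U₂) U₂ (M ∩ U₂) := by
  obtain ⟨hMF, -, hirr⟩ := hM
  refine ⟨inter_mem_Fam_restrictIB hMF U₂, fun hU₂ => hU₂M (inter_eq_right.mp hU₂),
    fun A hA B hB hAB => ?_⟩
  have hMAB : M = (M ∩ U₁ ∪ A) ∩ (M ∩ U₁ ∪ B) := by
    rw [← union_inter_distrib_left, ← hAB, h.inter_left_union_inter_right hMF.1]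
  refine (hirr _ (h.inter_left_union_mem_Fam hI hMF hA (hAB ▸ inter_subset_left)) _
    (h.inter_left_union_mem_Fam hI hMF hB (hAB ▸ inter_subset_right)) hMAB).imp
    (fun hA' => ?_) (fun hB' => ?_)
  · rw [hA', union_inter_eq_right_of_disjoint h.disjoint inter_subset_right hA.1]
  · rw [hB', union_inter_eq_right_of_disjoint h.disjoint inter_subset_right hB.1]

lemma isMaxExtension_of_meetIrred (hI : BaseOver I U) (h : IsAcyclicSplit I U U₁ U₂)
    {M : Finset α} (hM : MeetIrred (Fam I U) U M) (hU₂M : ¬ U₂ ⊆ M) :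
    IsMaxExtension I U U₂ (M ∩ U₂) M := by
  obtain ⟨hMF, -, hirr⟩ := hM
  refine ⟨hMF, rfl, fun C hC hCM hMC => ?_⟩
  have hMC' : M = C ∩ (M ∩ U₁ ∪ U₂) := by
    rw [inter_union_distrib_left, inter_eq_right.mpr (inter_subset_left.trans hMC), hCM,
      h.inter_left_union_inter_right hMF.1]
  have hF := h.inter_left_union_mem_Fam hI hMF (self_mem_Fam_restrictIB I U₂) inter_subset_right
  exact (hirr _ hC _ hF hMC').resolve_right fun hM' => hU₂M (hM' ▸ subset_union_right)

lemma setOf_meetIrred_eq (hI : BaseOver I U) (h : IsAcyclicSplit I U U₁ U₂) :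
    {M | MeetIrred (Fam I U) U M} =
      (· ∪ U₂) '' {M₁ | MeetIrred (Fam (restrictIB I U₁) U₁) U₁ M₁} ∪
      {C | ∃ M₂, MeetIrred (Fam (restrictIB I U₂) U₂) U₂ M₂ ∧ IsMaxExtension I U U₂ M₂ C} := by
  ext M
  refine ⟨fun hM => ?_, ?_⟩
  · by_cases hU₂M : U₂ ⊆ M
    · exact Or.inl ⟨M ∩ U₁, h.meetIrred_inter_left hI hM hU₂M,
        h.inter_left_union_right hM.1.1 hU₂M⟩
    · exact Or.inr ⟨M ∩ U₂, h.meetIrred_inter_right hI hM hU₂M,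
        h.isMaxExtension_of_meetIrred hI hM hU₂M⟩
  · rintro (⟨M₁, hM₁, rfl⟩ | ⟨M₂, hM₂, hC⟩)
    · exact h.meetIrred_union_right hI hM₁
    · exact hC.meetIrred h.right_subset hM₂

lemma disjoint_image_union_right_setOf_isMaxExtension (h : IsAcyclicSplit I U U₁ U₂) :
    Disjoint ((· ∪ U₂) '' {M₁ | M₁ ⊆ U₁})
      {C | ∃ M₂, MeetIrred (Fam (restrictIB I U₂) U₂) U₂ M₂ ∧ IsMaxExtension I U U₂ M₂ C} := by
  refine Set.disjoint_left.mpr ?_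
  rintro _ ⟨M₁, hM₁, rfl⟩ ⟨M₂, hM₂, -, hM₂', -⟩
  rw [union_inter_eq_right_of_disjoint h.disjoint hM₁ Subset.rfl] at hM₂'
  exact hM₂.2.1 hM₂'.symm

lemma injOn_union_right (h : IsAcyclicSplit I U U₁ U₂) : Set.InjOn (· ∪ U₂) {M₁ | M₁ ⊆ U₁} :=
  fun X hX Y hY hXY => by
    rw [← union_inter_eq_left_of_disjoint h.disjoint hX Subset.rfl,
      ← union_inter_eq_left_of_disjoint h.disjoint hY Subset.rfl]
    exact congrArg (· ∩ U₁) hXY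

lemma ncard_meetIrred_right_le (hI : BaseOver I U) (h : IsAcyclicSplit I U U₁ U₂) :
    {M₂ | MeetIrred (Fam (restrictIB I U₂) U₂) U₂ M₂}.ncard ≤
      {C | ∃ M₂, MeetIrred (Fam (restrictIB I U₂) U₂) U₂ M₂ ∧
        IsMaxExtension I U U₂ M₂ C}.ncard := by
  set S := {C | ∃ M₂, MeetIrred (Fam (restrictIB I U₂) U₂) U₂ M₂ ∧ IsMaxExtension I U U₂ M₂ C}
  have hfin : S.Finite := (finite_Fam I U).subset fun _ ⟨_, _, hC⟩ => hC.1
  have htrace : {M₂ | MeetIrred (Fam (restrictIB I U₂) U₂) U₂ M₂} ⊆ (· ∩ U₂) '' S := by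
    intro M₂ hM₂
    obtain ⟨C, hC⟩ := exists_isMaxExtension hM₂.1.1 (h.mem_Fam_of_mem_Fam_restrictIB_right hI hM₂.1)
    exact ⟨C, ⟨M₂, hM₂, hC⟩, hC.2.1⟩
  exact (Set.ncard_le_ncard htrace (hfin.image _)).trans (Set.ncard_image_le hfin)

end IsAcyclicSplit

/-- the meet-irreducible elements of a closure system with an
acyclic split. -/
theorem meetIrred_of_acyclic_split
    (I : Finset (Finset α × α)) (U U₁ U₂ : Finset α)
    (hI : BaseOver I U) (h : IsAcyclicSplit I U U₁ U₂) :
    {M : Finset α | MeetIrred (Fam I U) U M} =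
      ((fun M₁ => M₁ ∪ U₂) ''
        {M₁ : Finset α | MeetIrred (Fam (restrictIB I U₁) U₁) U₁ M₁}) ∪
      {C : Finset α | ∃ M₂ : Finset α,
        MeetIrred (Fam (restrictIB I U₂) U₂) U₂ M₂ ∧
        C ∈ Fam I U ∧ C ∩ U₂ = M₂ ∧
        ∀ C' ∈ Fam I U, C' ∩ U₂ = M₂ → C ⊆ C' → C = C'} ∧
    {M₁ : Finset α | MeetIrred (Fam (restrictIB I U₁) U₁) U₁ M₁}.ncard +
      {M₂ : Finset α | MeetIrred (Fam (restrictIB I U₂) U₂) U₂ M₂}.ncard ≤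
      {M : Finset α | MeetIrred (Fam I U) U M}.ncard := by
  have hsub : {M₁ | MeetIrred (Fam (restrictIB I U₁) U₁) U₁ M₁} ⊆ {M₁ | M₁ ⊆ U₁} :=
    fun _ hM₁ => hM₁.1.1
  refine ⟨h.setOf_meetIrred_eq hI, ?_⟩
  rw [h.setOf_meetIrred_eq hI,
    Set.ncard_union_eq (h.disjoint_image_union_right_setOf_isMaxExtension.mono_left
        (Set.image_mono hsub))
      ((finite_setOf_meetIrred _ U₁).image _)
      ((finite_Fam I U).subset fun _ ⟨_, _, hC⟩ => hC.1),
    (h.injOn_union_right.mono hsub).ncard_image]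
  exact Nat.add_le_add_left (h.ncard_meetIrred_right_le hI) _
end

section
/- Let I be an implicational base over finite U with acyclic split (U₁, U₂), let cl₁ denote the closure operator of I[U₁], and let C₂ be a model of I[U₂]. Then a model C₁ of I[U₁] is a minimal (under inclusion) model of I[U₁] not contributing to an extension of C₂ (i.e., C₁ ∪ C₂ is not a model of I, and every strictly smaller model C₁' of I[U₁] gives a model C₁' ∪ C₂ of I) if and only if C₁ is inclusion-minimal in the set {cl₁(A) : A → b ∈ I[U₁,U₂], b ∉ C₂}. -/
open Finset

variable {α : Type*} [DecidableEq α]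

/-- minimal models of `I[U₁]` not contributing to an extension
of `C₂` are exactly the minimal closures of premises of cross implications
whose conclusion misses `C₂`. -/
theorem minimal_noncontributing_charac
    (I : Finset (Finset α × α)) (U U₁ U₂ : Finset α)
    (hI : BaseOver I U) (h : IsAcyclicSplit I U U₁ U₂)
    (cl₁ : Finset α → Finset α)
    (hcl : ∀ X ⊆ U₁, X ⊆ cl₁ X ∧ cl₁ X ⊆ U₁ ∧
      IsModel (restrictIB I U₁) (cl₁ X) ∧
      ∀ D : Finset α, IsModel (restrictIB I U₁) D → X ⊆ D → D ⊆ U₁ →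
        cl₁ X ⊆ D)
    (C₂ : Finset α) (hC₂U : C₂ ⊆ U₂) (hC₂ : IsModel (restrictIB I U₂) C₂)
    (C₁ : Finset α) (hC₁U : C₁ ⊆ U₁) (hC₁ : IsModel (restrictIB I U₁) C₁) :
    ((¬ IsModel I (C₁ ∪ C₂)) ∧
      ∀ C₁' : Finset α, C₁' ⊂ C₁ → IsModel (restrictIB I U₁) C₁' →
        IsModel I (C₁' ∪ C₂))
    ↔
    ((∃ p ∈ I, p ∉ restrictIB I U₁ ∧ p ∉ restrictIB I U₂ ∧
        p.2 ∉ C₂ ∧ C₁ = cl₁ p.1) ∧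
      ∀ p ∈ I, p ∉ restrictIB I U₁ → p ∉ restrictIB I U₂ → p.2 ∉ C₂ →
        ¬ cl₁ p.1 ⊂ C₁) := by
  obtain ⟨⟨hU, hdisj, -, -, hsplit⟩, hacyc⟩ := h
  have cross : ∀ p ∈ I, p ∉ restrictIB I U₁ → p ∉ restrictIB I U₂ →
      p.1 ⊆ U₁ ∧ p.2 ∈ U₂ := by
    intro p hp h1 h2
    have hp1 : p.1 ⊆ U₁ := by
      apply hacyc p hp
      · intro hc
        exact h1 (Finset.mem_filter.mpr ⟨hp, hc⟩)
      · intro hc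
        exact h2 (Finset.mem_filter.mpr ⟨hp, hc⟩)
    refine ⟨hp1, ?_⟩
    have h2' : p.2 ∈ U₁ ∪ U₂ := by rw [hU]; exact (hI p hp).2.1
    rcases Finset.mem_union.mp h2' with hh | hh
    · exact absurd (Finset.mem_filter.mpr ⟨hp, hp1, hh⟩) h1
    · exact hh
  have key : ∀ D : Finset α, D ⊆ U₁ → IsModel (restrictIB I U₁) D →
      (IsModel I (D ∪ C₂) ↔ ∀ p ∈ I, p ∉ restrictIB I U₁ → p ∉ restrictIB I U₂ →
        p.1 ⊆ D → p.2 ∈ C₂) := by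
    intro D hDU hD
    constructor
    · intro hM p hp h1 h2 hpd
      have hm := hM p hp (hpd.trans Finset.subset_union_left)
      rcases Finset.mem_union.mp hm with hh | hh
      · exact absurd ((cross p hp h1 h2).2)
          (Finset.disjoint_left.mp hdisj (hDU hh))
      · exact hh
    · intro hcr p hp hsub
      by_cases h1 : p ∈ restrictIB I U₁
      · obtain ⟨-, hp1, -⟩ := Finset.mem_filter.mp h1
        have hpD : p.1 ⊆ D := fun x hx => by
          rcases Finset.mem_union.mp (hsub hx) with hh | hh
          · exact hh
          · exact absurd (hC₂U hh) (Finset.disjoint_left.mp hdisj (hp1 hx))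
        exact Finset.mem_union_left _ (hD p h1 hpD)
      by_cases h2 : p ∈ restrictIB I U₂
      · obtain ⟨-, hp1, -⟩ := Finset.mem_filter.mp h2
        have hpC : p.1 ⊆ C₂ := fun x hx => by
          rcases Finset.mem_union.mp (hsub hx) with hh | hh
          · exact absurd (hDU hh) (Finset.disjoint_right.mp hdisj (hp1 hx))
          · exact hh
        exact Finset.mem_union_right _ (hC₂ p h2 hpC)
      · have hc := cross p hp h1 h2
        have hpD : p.1 ⊆ D := fun x hx => by
          rcases Finset.mem_union.mp (hsub hx) with hh | hh
          · exact hh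
          · exact absurd (hC₂U hh) (Finset.disjoint_left.mp hdisj (hc.1 hx))
        exact Finset.mem_union_right _ (hcr p hp h1 h2 hpD)
  constructor
  · rintro ⟨hnot, hmin⟩
    have hminR : ∀ p ∈ I, p ∉ restrictIB I U₁ → p ∉ restrictIB I U₂ → p.2 ∉ C₂ →
        ¬ cl₁ p.1 ⊂ C₁ := by
      intro p hp h1 h2 hb hss
      obtain ⟨hXc, hcU, hcM, -⟩ := hcl p.1 (cross p hp h1 h2).1
      have hmod := hmin _ hss hcM
      exact hb ((key _ hcU hcM).mp hmod p hp h1 h2 hXc)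
    refine ⟨?_, hminR⟩
    rw [key C₁ hC₁U hC₁] at hnot
    push_neg at hnot
    obtain ⟨p, hp, h1, h2, hpC, hb⟩ := hnot
    obtain ⟨hXc, hcU, hcM, hle⟩ := hcl p.1 (cross p hp h1 h2).1
    have hsub : cl₁ p.1 ⊆ C₁ := hle C₁ hC₁ hpC hC₁U
    refine ⟨p, hp, h1, h2, hb, ?_⟩
    rcases hsub.ssubset_or_eq with hlt | heq
    · exact absurd hlt (hminR p hp h1 h2 hb)
    · exact heq.symm
  · rintro ⟨⟨p, hp, h1, h2, hb, hC⟩, hmin⟩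
    obtain ⟨hXc, hcU, hcM, -⟩ := hcl p.1 (cross p hp h1 h2).1
    constructor
    · rw [key C₁ hC₁U hC₁]
      push_neg
      exact ⟨p, hp, h1, h2, hC ▸ hXc, hb⟩
    · intro C₁' hss hM'
      have hC₁'U : C₁' ⊆ U₁ := hss.subset.trans hC₁U
      rw [key C₁' hC₁'U hM']
      intro q hq hq1 hq2 hqC
      by_contra hqb
      obtain ⟨-, -, -, hle⟩ := hcl q.1 (cross q hq hq1 hq2).1
      exact hmin q hq hq1 hq2 hqb
        (lt_of_le_of_lt (hle C₁' hM' hqC hC₁'U) hss)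
end

section
/- H-decomposability of implicational bases is hereditary: if an implicational base I over finite U admits an I-tree (a hierarchical decomposition by recursive splits), then for every subset X ⊆ U, the restriction I[X] also admits an I[X]-tree. -/
open Finset

variable {α : Type*} [DecidableEq α]

/-- A full rooted binary decomposition tree for an implicational base. -/
inductive ITree (α : Type*) where
  | leaf (v : α)
  | node (l r : ITree α) (lab : Finset (Finset α × α))

/-- Leaf labels of the tree. -/
def ITree.elems : ITree α → Finset α
  | .leaf v => {v}
  | .node l r _ => l.elems ∪ r.elems

/-- All implications labeling nodes of the tree. -/
def ITree.impls : ITree α → Finset (Finset α × α)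
  | .leaf _ => ∅
  | .node l r lab => lab ∪ l.impls ∪ r.impls

/-- Validity of an `I`-tree: leaf labels partition the ground set, node
labels partition the implications, and every implication labeling a node has
its premise among the leaves of one child and its conclusion among the leaves
of the other. -/
def ITree.valid : ITree α → Prop
  | .leaf _ => True
  | .node l r lab =>
      Disjoint l.elems r.elems ∧
      (∀ p ∈ lab, (p.1 ⊆ l.elems ∧ p.2 ∈ r.elems) ∨
        (p.1 ⊆ r.elems ∧ p.2 ∈ l.elems)) ∧
      Disjoint lab (l.impls ∪ r.impls) ∧ Disjoint l.impls r.impls ∧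
      l.valid ∧ r.valid

/-- `I` over `U` admits an `I`-tree (hierarchical decomposition). -/
def HDecomposable (I : Finset (Finset α × α)) (U : Finset α) : Prop :=
  (U = ∅ ∧ I = ∅) ∨ ∃ t : ITree α, t.valid ∧ t.elems = U ∧ t.impls = I


/-- Elements of a tree form a nonempty set. -/
lemma ITree.elems_nonempty (t : ITree α) : t.elems.Nonempty := by
  induction t with
  | leaf v => exact ⟨v, by simp [ITree.elems]⟩
  | node l r lab ihl ihr =>
    obtain ⟨x, hx⟩ := ihl
    exact ⟨x, by simp [ITree.elems, hx]⟩

lemma premise_subset_elems (t : ITree α) (ht : t.valid) :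
    ∀ p ∈ t.impls, p.1 ⊆ t.elems ∧ p.2 ∈ t.elems := by
  induction t with
  | leaf v => simp [ITree.impls]
  | node l r lab ihl ihr =>
    obtain ⟨hd, hlab, _, _, hvl, hvr⟩ := ht
    intro p hp
    simp only [ITree.impls, Finset.mem_union] at hp
    rcases hp with (hp | hp) | hp
    · rcases hlab p hp with ⟨h1, h2⟩ | ⟨h1, h2⟩
      · exact ⟨h1.trans (Finset.subset_union_left), by simp [ITree.elems, h2]⟩
      · exact ⟨h1.trans (Finset.subset_union_right), by simp [ITree.elems, h2]⟩
    · obtain ⟨h1, h2⟩ := ihl hvl p hp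
      exact ⟨h1.trans (Finset.subset_union_left), by simp [ITree.elems, h2]⟩
    · obtain ⟨h1, h2⟩ := ihr hvr p hp
      exact ⟨h1.trans (Finset.subset_union_right), by simp [ITree.elems, h2]⟩

/-- Prune a tree to the ground set `X`. -/
def pruneT (X : Finset α) : ITree α → Option (ITree α)
  | .leaf v => if v ∈ X then some (.leaf v) else none
  | .node l r lab =>
    match pruneT X l, pruneT X r with
    | some l', some r' =>
        some (.node l' r' (lab.filter (fun p => p.1 ⊆ X ∧ p.2 ∈ X)))
    | some l', none => some l'
    | none, some r' => some r'
    | none, none => none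

lemma prune_spec (X : Finset α) (t : ITree α) (ht : t.valid)
    (hne : ∀ p ∈ t.impls, p.1.Nonempty) :
    (pruneT X t = none ∧ t.elems ∩ X = ∅) ∨
    ∃ t', pruneT X t = some t' ∧ t'.valid ∧ t'.elems = t.elems ∩ X ∧
      t'.impls = t.impls.filter (fun p => p.1 ⊆ X ∧ p.2 ∈ X) := by
  induction t with
  | leaf v =>
    by_cases hv : v ∈ X
    · refine Or.inr ⟨.leaf v, by simp [pruneT, hv], trivial, ?_, by simp [ITree.impls]⟩
      simp [ITree.elems, Finset.inter_eq_left.mpr, hv,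
        Finset.singleton_subset_iff]
    · exact Or.inl ⟨by simp [pruneT, hv], by
        simp [ITree.elems, Finset.singleton_inter_of_notMem hv]⟩
  | node l r lab ihl ihr =>
    obtain ⟨hd, hlab, hd2, hd3, hvl, hvr⟩ := ht
    have hnel : ∀ p ∈ l.impls, p.1.Nonempty := fun p hp =>
      hne p (by simp [ITree.impls, hp])
    have hner : ∀ p ∈ r.impls, p.1.Nonempty := fun p hp =>
      hne p (by simp [ITree.impls, hp])
    -- if a subtree is killed, no implication in it survives the filter
    have hkill : ∀ s : ITree α, s.valid → s.elems ∩ X = ∅ →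
        (∀ p ∈ s.impls, p.1.Nonempty) →
        s.impls.filter (fun p => p.1 ⊆ X ∧ p.2 ∈ X) = ∅ := by
      intro s hs hse hsne
      apply Finset.filter_false_of_mem
      rintro p hp ⟨h1, h2⟩
      obtain ⟨x, hx⟩ := hsne p hp
      have := (premise_subset_elems s hs p hp).1 hx
      have : x ∈ s.elems ∩ X := Finset.mem_inter.mpr ⟨this, h1 hx⟩
      simp [hse] at this
    rcases ihl hvl hnel with ⟨hl0, hle⟩ | ⟨l', hl0, hlv, hle, hli⟩ <;>
      rcases ihr hvr hner with ⟨hr0, hre⟩ | ⟨r', hr0, hrv, hre, hri⟩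
    · refine Or.inl ⟨by simp [pruneT, hl0, hr0], ?_⟩
      simp [ITree.elems, Finset.union_inter_distrib_right, hle, hre]
    · -- left killed, right survives
      refine Or.inr ⟨r', by simp [pruneT, hl0, hr0], hrv, ?_, ?_⟩
      · simp [ITree.elems, Finset.union_inter_distrib_right, hle, hre]
      · have hlabkill : lab.filter (fun p => p.1 ⊆ X ∧ p.2 ∈ X) = ∅ := by
          apply Finset.filter_false_of_mem
          rintro p hp ⟨h1, h2⟩
          rcases hlab p hp with ⟨ha, hb⟩ | ⟨ha, hb⟩
          · obtain ⟨x, hx⟩ := hne p (by simp [ITree.impls, hp])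
            have : x ∈ l.elems ∩ X := Finset.mem_inter.mpr ⟨ha hx, h1 hx⟩
            simp [hle] at this
          · have : p.2 ∈ l.elems ∩ X := Finset.mem_inter.mpr ⟨hb, h2⟩
            simp [hle] at this
        rw [hri]
        simp only [ITree.impls, Finset.filter_union]
        rw [hlabkill, hkill l hvl hle hnel]
        simp
    · -- right killed, left survives
      refine Or.inr ⟨l', by simp [pruneT, hl0, hr0], hlv, ?_, ?_⟩
      · simp [ITree.elems, Finset.union_inter_distrib_right, hle, hre]
      · have hlabkill : lab.filter (fun p => p.1 ⊆ X ∧ p.2 ∈ X) = ∅ := by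
          apply Finset.filter_false_of_mem
          rintro p hp ⟨h1, h2⟩
          rcases hlab p hp with ⟨ha, hb⟩ | ⟨ha, hb⟩
          · have : p.2 ∈ r.elems ∩ X := Finset.mem_inter.mpr ⟨hb, h2⟩
            simp [hre] at this
          · obtain ⟨x, hx⟩ := hne p (by simp [ITree.impls, hp])
            have : x ∈ r.elems ∩ X := Finset.mem_inter.mpr ⟨ha hx, h1 hx⟩
            simp [hre] at this
        rw [hli]
        simp only [ITree.impls, Finset.filter_union]
        rw [hlabkill, hkill r hvr hre hner]
        simp
    · -- both survive
      refine Or.inr ⟨.node l' r' (lab.filter (fun p => p.1 ⊆ X ∧ p.2 ∈ X)),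
        by simp [pruneT, hl0, hr0], ?_, ?_, ?_⟩
      · refine ⟨?_, ?_, ?_, ?_, hlv, hrv⟩
        · rw [hle, hre]
          exact (hd.mono Finset.inter_subset_left Finset.inter_subset_left)
        · intro p hp
          rw [Finset.mem_filter] at hp
          obtain ⟨hp, h1, h2⟩ := hp
          rcases hlab p hp with ⟨ha, hb⟩ | ⟨ha, hb⟩
          · exact Or.inl ⟨by rw [hle]; exact Finset.subset_inter ha h1,
              by rw [hre]; exact Finset.mem_inter.mpr ⟨hb, h2⟩⟩
          · exact Or.inr ⟨by rw [hre]; exact Finset.subset_inter ha h1,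
              by rw [hle]; exact Finset.mem_inter.mpr ⟨hb, h2⟩⟩
        · refine hd2.mono (Finset.filter_subset _ _) ?_
          rw [hli, hri]
          exact Finset.union_subset_union (Finset.filter_subset _ _)
            (Finset.filter_subset _ _)
        · rw [hli, hri]
          exact hd3.mono (Finset.filter_subset _ _) (Finset.filter_subset _ _)
      · simp [ITree.elems, hle, hre, Finset.union_inter_distrib_right]
      · simp [ITree.impls, hli, hri, Finset.filter_union]

/-- H-decomposability is hereditary: every restriction of an
H-decomposable implicational base is H-decomposable. -/
theorem hdecomposable_hereditary (I : Finset (Finset α × α)) (U : Finset α)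
    (hI : BaseOver I U) (h : HDecomposable I U) :
    ∀ X ⊆ U, HDecomposable (restrictIB I X) X := by
  intro X hX
  rcases X.eq_empty_or_nonempty with rfl | hXne
  · refine Or.inl ⟨rfl, ?_⟩
    rw [restrictIB, Finset.filter_false_of_mem]
    rintro p hp ⟨h1, h2⟩
    simp at h2
  · rcases h with ⟨rfl, rfl⟩ | ⟨t, htv, hte, hti⟩
    · exact absurd (hX hXne.choose_spec) (by simp)
    · have hne : ∀ p ∈ t.impls, p.1.Nonempty := by
        intro p hp
        exact (hI p (hti ▸ hp)).2.2
      rcases prune_spec X t htv hne with ⟨_, he⟩ | ⟨t', _, hv, he, hi⟩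
      · obtain ⟨x, hx⟩ := hXne
        have : x ∈ t.elems ∩ X := Finset.mem_inter.mpr ⟨hte ▸ hX hx, hx⟩
        simp [he] at this
      · refine Or.inr ⟨t', hv, ?_, ?_⟩
        · rw [he, hte, Finset.inter_eq_right.mpr hX]
        · rw [hi, hti]; rfl
end

section
/- Let I be an implicational base over finite U that is not premise-connected, and let C be a premise-connected component of I. Then I is H-decomposable if and only if both I[C] and I[U \ C] are H-decomposable. -/
open Finset

variable {α : Type*} [DecidableEq α]

/-!
A premise-connected component `C` and its complement split `I`: no premise meets both sides,
since a premise meeting `C` could be added to `C` without losing connectivity.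
An `I`-tree restricts to an `I[X]`-tree for every `X`: keep the leaves in `X` and contract
every node one of whose subtrees loses all its leaves; such a node carries no implication of
`I[X]` because premises are nonempty. Conversely, given a split, trees for the two sides joined
under a new root labelled by the implications crossing the split form an `I`-tree.
-/

section

variable {I : Finset (Finset α × α)} {U C X : Finset α}

theorem PremiseConnectedOn.union_premise (hC : PremiseConnectedOn I C) {p : Finset α × α}
    (hp : p ∈ I) {x : α} (hxC : x ∈ C) (hxp : x ∈ p.1) :
    PremiseConnectedOn I (C ∪ p.1) := by
  have to_x : ∀ u ∈ C ∪ p.1, Relation.ReflTransGen (PremiseStep I) u x := by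
    intro u hu
    rcases mem_union.1 hu with hu | hu
    · exact hC u hu x hxC
    · exact .single ⟨p, hp, hu, hxp⟩
  have from_x : ∀ v ∈ C ∪ p.1, Relation.ReflTransGen (PremiseStep I) x v := by
    intro v hv
    rcases mem_union.1 hv with hv | hv
    · exact hC x hxC v hv
    · exact .single ⟨p, hp, hxp, hv⟩
  exact fun u hu v hv => (to_x u hu).trans (from_x v hv)

theorem IsComponent.premise_subset_or (hC : IsComponent I U C) {p : Finset α × α}
    (hp : p ∈ I) (hpU : p.1 ⊆ U) : p.1 ⊆ C ∨ p.1 ⊆ U \ C := by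
  obtain ⟨hCU, hCconn, hCmax⟩ := hC
  by_cases hmeet : ∃ x ∈ p.1, x ∈ C
  · obtain ⟨x, hxp, hxC⟩ := hmeet
    have hunion : C ∪ p.1 = C :=
      hCmax _ subset_union_left (union_subset hCU hpU) (hCconn.union_premise hp hxC hxp)
    exact .inl (hunion ▸ subset_union_right)
  · push Not at hmeet
    exact .inr fun a ha => mem_sdiff.2 ⟨hpU ha, hmeet a ha⟩

theorem IsComponent.isSplit_sdiff (hI : BaseOver I U) (hnc : ¬ PremiseConnectedOn I U)
    (hC : IsComponent I U C) : IsSplit I U C (U \ C) := by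
  have ⟨hCU, hCconn, hCmax⟩ := hC
  have hUne : U.Nonempty :=
    nonempty_iff_ne_empty.2 fun hU => hnc fun u hu => absurd (hU ▸ hu) (notMem_empty u)
  have hCne : C.Nonempty := by
    refine nonempty_iff_ne_empty.2 fun hC0 => ?_
    obtain ⟨u, hu⟩ := hUne
    have hsingleton : PremiseConnectedOn I {u} := by
      intro a ha b hb
      rw [mem_singleton] at ha hb
      exact ha ▸ hb ▸ .refl
    have hCu : {u} = C := hCmax {u} (hC0 ▸ empty_subset _) (singleton_subset_iff.2 hu) hsingleton
    exact singleton_ne_empty u (hCu.trans hC0)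
  have hUCne : (U \ C).Nonempty := by
    refine nonempty_iff_ne_empty.2 fun hUC => hnc ?_
    rwa [le_antisymm (sdiff_eq_empty_iff_subset.1 hUC) hCU]
  exact ⟨union_sdiff_of_subset hCU, disjoint_sdiff, hCne, hUCne,
    fun p hp => hC.premise_subset_or hp (hI p hp).1⟩

theorem restrictIB_union (J K : Finset (Finset α × α)) (X : Finset α) :
    restrictIB (J ∪ K) X = restrictIB J X ∪ restrictIB K X :=
  filter_union _ _ _

theorem restrictIB_subset (J : Finset (Finset α × α)) (X : Finset α) : restrictIB J X ⊆ J :=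
  filter_subset _ _

theorem restrictIB_eq_empty {E : Finset α} (hne : ∀ p ∈ I, p.1.Nonempty)
    (hE : ∀ p ∈ I, p.1 ⊆ E ∨ p.2 ∈ E) (hEX : Disjoint E X) : restrictIB I X = ∅ := by
  refine filter_eq_empty_iff.2 fun p hp ⟨h1, h2⟩ => ?_
  rcases hE p hp with h | h
  · obtain ⟨a, ha⟩ := hne p hp
    exact disjoint_left.1 hEX (h ha) (h1 ha)
  · exact disjoint_left.1 hEX h h2

end

theorem ITree.valid.fst_subset_elems {t : ITree α} (hv : t.valid) {p : Finset α × α}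
    (hp : p ∈ t.impls) : p.1 ⊆ t.elems := by
  induction t with
  | leaf v => simp [ITree.impls] at hp
  | node l r lab ihl ihr =>
    obtain ⟨-, hcross, -, -, hvl, hvr⟩ := hv
    simp only [ITree.impls, mem_union] at hp
    simp only [ITree.elems]
    rcases hp with (hp | hp) | hp
    · rcases hcross p hp with ⟨h, -⟩ | ⟨h, -⟩
      · exact h.trans subset_union_left
      · exact h.trans subset_union_right
    · exact (ihl hvl hp).trans subset_union_left
    · exact (ihr hvr hp).trans subset_union_right

theorem ITree.valid.node_restrictIB {l r l' r' : ITree α} {lab : Finset (Finset α × α)}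
    {X : Finset α} (hv : (ITree.node l r lab).valid)
    (hl' : l'.valid ∧ l'.elems = l.elems ∩ X ∧ l'.impls = restrictIB l.impls X)
    (hr' : r'.valid ∧ r'.elems = r.elems ∩ X ∧ r'.impls = restrictIB r.impls X) :
    (ITree.node l' r' (restrictIB lab X)).valid := by
  obtain ⟨hd, hcross, hdlab, hdlr, -, -⟩ := hv
  obtain ⟨hvl', hel', hil'⟩ := hl'
  obtain ⟨hvr', her', hir'⟩ := hr'
  refine ⟨?_, ?_, ?_, ?_, hvl', hvr'⟩
  · rw [hel', her']
    exact hd.mono inter_subset_left inter_subset_left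
  · intro p hp
    obtain ⟨hp, h1, h2⟩ := mem_filter.1 hp
    rw [hel', her']
    rcases hcross p hp with ⟨hl1, hr2⟩ | ⟨hr1, hl2⟩
    · exact .inl ⟨subset_inter hl1 h1, mem_inter.2 ⟨hr2, h2⟩⟩
    · exact .inr ⟨subset_inter hr1 h1, mem_inter.2 ⟨hl2, h2⟩⟩
  · rw [hil', hir']
    exact hdlab.mono (restrictIB_subset _ _)
      (union_subset_union (restrictIB_subset _ _) (restrictIB_subset _ _))
  · rw [hil', hir']
    exact hdlr.mono (restrictIB_subset _ _) (restrictIB_subset _ _)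

theorem ITree.valid.exists_restrict {t : ITree α} (hv : t.valid)
    (hne : ∀ p ∈ t.impls, p.1.Nonempty) {X : Finset α} (hX : ¬ Disjoint t.elems X) :
    ∃ t' : ITree α, t'.valid ∧ t'.elems = t.elems ∩ X ∧ t'.impls = restrictIB t.impls X := by
  induction t with
  | leaf v =>
    have hvX : v ∈ X := by_contra fun h => hX (disjoint_singleton_left.2 h)
    exact ⟨.leaf v, trivial, by simp [ITree.elems, hvX], by simp [ITree.impls, restrictIB]⟩
  | node l r lab ihl ihr =>
    have ⟨_, hcross, _, _, hvl, hvr⟩ := hv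
    simp only [ITree.impls, mem_union] at hne
    have hnel : ∀ p ∈ l.impls, p.1.Nonempty := fun p hp => hne p (.inl (.inr hp))
    have hner : ∀ p ∈ r.impls, p.1.Nonempty := fun p hp => hne p (.inr hp)
    have hlabne : ∀ p ∈ lab, p.1.Nonempty := fun p hp => hne p (.inl (.inl hp))
    simp only [ITree.elems, ITree.impls, union_inter_distrib_right, restrictIB_union]
    by_cases hl : Disjoint l.elems X <;> by_cases hr : Disjoint r.elems X
    · exact absurd (disjoint_union_left.2 ⟨hl, hr⟩) hX
    · obtain ⟨r', hr'⟩ := ihr hvr hner hr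
      have hlab : restrictIB lab X = ∅ := restrictIB_eq_empty hlabne
        (fun p hp => (hcross p hp).elim (fun h => .inl h.1) (fun h => .inr h.2)) hl
      have hli : restrictIB l.impls X = ∅ :=
        restrictIB_eq_empty hnel (fun p hp => .inl (hvl.fst_subset_elems hp)) hl
      refine ⟨r', hr'.1, ?_, ?_⟩
      · rw [hr'.2.1, disjoint_iff_inter_eq_empty.1 hl, empty_union]
      · rw [hr'.2.2, hlab, hli, empty_union, empty_union]
    · obtain ⟨l', hl'⟩ := ihl hvl hnel hl
      have hlab : restrictIB lab X = ∅ := restrictIB_eq_empty hlabne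
        (fun p hp => (hcross p hp).elim (fun h => .inr h.2) (fun h => .inl h.1)) hr
      have hri : restrictIB r.impls X = ∅ :=
        restrictIB_eq_empty hner (fun p hp => .inl (hvr.fst_subset_elems hp)) hr
      refine ⟨l', hl'.1, ?_, ?_⟩
      · rw [hl'.2.1, disjoint_iff_inter_eq_empty.1 hr, union_empty]
      · rw [hl'.2.2, hlab, hri, empty_union, union_empty]
    · obtain ⟨l', hl'⟩ := ihl hvl hnel hl
      obtain ⟨r', hr'⟩ := ihr hvr hner hr
      refine ⟨.node l' r' (restrictIB lab X), hv.node_restrictIB hl' hr', ?_, ?_⟩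
      · simp only [ITree.elems, hl'.2.1, hr'.2.1]
      · simp only [ITree.impls, hl'.2.2, hr'.2.2]

section

variable {I : Finset (Finset α × α)} {U U₁ U₂ X : Finset α}

theorem HDecomposable.restrictIB (h : HDecomposable I U) (hne : ∀ p ∈ I, p.1.Nonempty)
    (hXU : X ⊆ U) : HDecomposable (restrictIB I X) X := by
  rcases X.eq_empty_or_nonempty with rfl | hX
  · exact .inl ⟨rfl, filter_eq_empty_iff.2 fun p hp h => (hne p hp).ne_empty (subset_empty.1 h.1)⟩
  rcases h with ⟨rfl, -⟩ | ⟨t, hv, rfl, rfl⟩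
  · exact absurd (subset_empty.1 hXU) hX.ne_empty
  have hmeet : ¬ Disjoint t.elems X := fun hd => hX.ne_empty (disjoint_self.1 (hd.mono_left hXU))
  obtain ⟨t', hv', he', hi'⟩ := hv.exists_restrict hne hmeet
  exact .inr ⟨t', hv', he'.trans (inter_eq_right.2 hXU), hi'⟩

theorem IsSplit.hdecomposable (hs : IsSplit I U U₁ U₂) (hI : BaseOver I U)
    (h₁ : HDecomposable (restrictIB I U₁) U₁) (h₂ : HDecomposable (restrictIB I U₂) U₂) :
    HDecomposable I U := by
  obtain ⟨hU, hd, hne₁, hne₂, hprem⟩ := hs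
  obtain ⟨h₁, -⟩ | ⟨t₁, hv₁, rfl, hi₁⟩ := h₁
  · exact absurd h₁ hne₁.ne_empty
  obtain ⟨h₂, -⟩ | ⟨t₂, hv₂, rfl, hi₂⟩ := h₂
  · exact absurd h₂ hne₂.ne_empty
  have hsub : restrictIB I t₁.elems ∪ restrictIB I t₂.elems ⊆ I :=
    union_subset (restrictIB_subset _ _) (restrictIB_subset _ _)
  refine .inr ⟨.node t₁ t₂ (I \ (restrictIB I t₁.elems ∪ restrictIB I t₂.elems)),
    ⟨hd, ?_, ?_, ?_, hv₁, hv₂⟩, hU, ?_⟩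
  · intro p hp
    simp only [mem_sdiff, mem_union, restrictIB, mem_filter, not_or, not_and] at hp
    obtain ⟨hpI, hn₁, hn₂⟩ := hp
    have hconc : p.2 ∈ t₁.elems ∪ t₂.elems := hU ▸ (hI p hpI).2.1
    rcases hprem p hpI with h | h
    · exact .inl ⟨h, (mem_union.1 hconc).resolve_left (hn₁ hpI h)⟩
    · exact .inr ⟨h, (mem_union.1 hconc).resolve_right (hn₂ hpI h)⟩
  · rw [hi₁, hi₂]
    exact sdiff_disjoint
  · rw [hi₁, hi₂, disjoint_left]
    intro p hp₁ hp₂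
    obtain ⟨x, hx⟩ := (hI p (mem_filter.1 hp₁).1).2.2
    exact disjoint_left.1 hd ((mem_filter.1 hp₁).2.1 hx) ((mem_filter.1 hp₂).2.1 hx)
  · rw [ITree.impls, hi₁, hi₂, union_assoc, sdiff_union_of_subset hsub]

theorem IsSplit.hdecomposable_iff (hs : IsSplit I U U₁ U₂) (hI : BaseOver I U) :
    HDecomposable I U ↔
      HDecomposable (restrictIB I U₁) U₁ ∧ HDecomposable (restrictIB I U₂) U₂ := by
  have hne : ∀ p ∈ I, p.1.Nonempty := fun p hp => (hI p hp).2.2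
  refine ⟨fun h => ⟨h.restrictIB hne ?_, h.restrictIB hne ?_⟩, fun h => hs.hdecomposable hI h.1 h.2⟩
  · exact hs.1 ▸ subset_union_left
  · exact hs.1 ▸ subset_union_right

end

/-- `I` is H-decomposable iff the restrictions to a
premise-connected component `C` and to its complement are H-decomposable. -/
theorem hdecomposable_iff_components (I : Finset (Finset α × α)) (U C : Finset α)
    (hI : BaseOver I U) (hnc : ¬ PremiseConnectedOn I U)
    (hC : IsComponent I U C) :
    HDecomposable I U ↔
      HDecomposable (restrictIB I C) C ∧
      HDecomposable (restrictIB I (U \ C)) (U \ C) :=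
  (hC.isSplit_sdiff hI hnc).hdecomposable_iff hI
end

section
/- Any two I-trees of the same implicational base I (allowing leaves labeled by irreducible H-factors, i.e., premise-connected sub-bases) have the same number of leaves and the same multiset of leaf labels: the irreducible H-factors of I are independent of the choice of decomposition tree. -/
open Finset

variable {α : Type*} [DecidableEq α]

/-- A full rooted binary decomposition tree whose leaves may be single
elements or irreducible H-factors. -/
inductive HTree (α : Type*) where
  | leafElem (v : α)
  | leafFactor (V : Finset α) (J : Finset (Finset α × α))
  | node (l r : HTree α) (lab : Finset (Finset α × α))

/-- Ground-set elements spanned by the tree. -/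
def HTree.elems : HTree α → Finset α
  | .leafElem v => {v}
  | .leafFactor V _ => V
  | .node l r _ => l.elems ∪ r.elems

/-- All implications carried by the tree. -/
def HTree.impls : HTree α → Finset (Finset α × α)
  | .leafElem _ => ∅
  | .leafFactor _ J => J
  | .node l r lab => lab ∪ l.impls ∪ r.impls

/-- The multiset of leaf labels: either an element of the ground set or an
H-factor (a premise-connected sub-base together with its ground set). -/
def HTree.leafLabels : HTree α → Multiset (α ⊕ (Finset α × Finset (Finset α × α)))
  | .leafElem v => {Sum.inl v}
  | .leafFactor V J => {Sum.inr (V, J)}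
  | .node l r _ => l.leafLabels + r.leafLabels

/-- Validity: factor leaves are nontrivial premise-connected sub-bases,
element leaves and factor ground sets partition the ground set, node labels
partition the implications, and node implications cross between the two
children. -/
def HTree.valid : HTree α → Prop
  | .leafElem _ => True
  | .leafFactor V J =>
      2 ≤ V.card ∧ BaseOver J V ∧ PremiseConnectedOn J V
  | .node l r lab =>
      Disjoint l.elems r.elems ∧
      (∀ p ∈ lab, (p.1 ⊆ l.elems ∧ p.2 ∈ r.elems) ∨
        (p.1 ⊆ r.elems ∧ p.2 ∈ l.elems)) ∧
      Disjoint lab (l.impls ∪ r.impls) ∧ Disjoint l.impls r.impls ∧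
      l.valid ∧ r.valid


/-! ### Auxiliary development -/

theorem HTree.valid_baseOver : ∀ t : HTree α, t.valid →
    ∀ p ∈ t.impls, p.1 ⊆ t.elems ∧ p.2 ∈ t.elems := by
  intro t
  induction t with
  | leafElem v => intro _ p hp; simp [HTree.impls] at hp
  | leafFactor V J =>
      intro hv p hp
      obtain ⟨-, hBO, -⟩ := hv
      obtain ⟨h1, h2, -⟩ := hBO p hp
      exact ⟨h1, h2⟩
  | node l r lab ihl ihr =>
      intro hv p hp
      obtain ⟨-, hcross, -, -, hvl, hvr⟩ := hv
      simp only [HTree.impls, Finset.mem_union] at hp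
      simp only [HTree.elems]
      rcases hp with (hp | hp) | hp
      · rcases hcross p hp with ⟨h1, h2⟩ | ⟨h1, h2⟩
        · exact ⟨h1.trans Finset.subset_union_left, Finset.mem_union_right _ h2⟩
        · exact ⟨h1.trans Finset.subset_union_right, Finset.mem_union_left _ h2⟩
      · obtain ⟨h1, h2⟩ := ihl hvl p hp
        exact ⟨h1.trans Finset.subset_union_left, Finset.mem_union_left _ h2⟩
      · obtain ⟨h1, h2⟩ := ihr hvr p hp
        exact ⟨h1.trans Finset.subset_union_right, Finset.mem_union_right _ h2⟩

theorem HTree.valid_elems_nonempty : ∀ t : HTree α, t.valid → t.elems.Nonempty := by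
  intro t
  induction t with
  | leafElem v => intro _; simp [HTree.elems]
  | leafFactor V J =>
      intro hv
      exact Finset.card_pos.mp (show 0 < V.card by have := hv.1; omega)
  | node l r lab ihl ihr =>
      intro hv
      obtain ⟨x, hx⟩ := ihl hv.2.2.2.2.1
      exact ⟨x, by simp [HTree.elems]; exact Or.inl hx⟩

theorem reach_mem (J : Finset (Finset α × α)) (A : Finset α)
    (hc : ∀ p ∈ J, p.1 ⊆ A ∨ Disjoint p.1 A) {u v : α}
    (h : Relation.ReflTransGen (PremiseStep J) u v) (hu : u ∈ A) : v ∈ A := by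
  induction h with
  | refl => exact hu
  | tail _ step ih =>
      obtain ⟨p, hp, hb, hc'⟩ := step
      rcases hc p hp with hsub | hdis
      · exact hsub hc'
      · exact absurd ih (Finset.disjoint_left.mp hdis hb)

theorem factor_side (J : Finset (Finset α × α)) (V A : Finset α)
    (hconn : PremiseConnectedOn J V)
    (hc : ∀ p ∈ J, p.1 ⊆ A ∨ Disjoint p.1 A) (hne : (V ∩ A).Nonempty) : V ⊆ A := by
  obtain ⟨u, hu⟩ := hne
  rw [Finset.mem_inter] at hu
  intro v hv
  exact reach_mem J A hc (hconn u hu.1 v hv) hu.2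

/-- Restriction of a decomposition tree to one side of a split. -/
def HTree.restrict (A : Finset α) : HTree α → Option (HTree α)
  | .leafElem v => if v ∈ A then some (.leafElem v) else none
  | .leafFactor V J => if (V ∩ A).Nonempty then some (.leafFactor V J) else none
  | .node l r lab =>
      match l.restrict A, r.restrict A with
      | none, none => none
      | some l', none => some l'
      | none, some r' => some r'
      | some l', some r' =>
          some (.node l' r' (lab.filter (fun p => p.1 ⊆ A ∧ p.2 ∈ A)))

theorem HTree.restrict_eq_none (A : Finset α) :
    ∀ t : HTree α, t.restrict A = none → ∀ x ∈ t.elems, x ∉ A := by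
  intro t
  induction t with
  | leafElem v =>
      intro h x hx
      simp only [HTree.elems, Finset.mem_singleton] at hx
      subst hx
      by_contra hv
      simp [HTree.restrict, hv] at h
  | leafFactor V J =>
      intro h x hx hxA
      have : (V ∩ A).Nonempty := ⟨x, Finset.mem_inter.mpr ⟨hx, hxA⟩⟩
      simp [HTree.restrict, this] at h
  | node l r lab ihl ihr =>
      intro h x hx hxA
      simp only [HTree.restrict] at h
      cases hl : l.restrict A <;> cases hr : r.restrict A <;>
        simp [hl, hr] at h
      simp only [HTree.elems, Finset.mem_union] at hx
      rcases hx with hx | hx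
      · exact ihl hl x hx hxA
      · exact ihr hr x hx hxA

theorem HTree.restrict_spec (A : Finset α) :
    ∀ t : HTree α, t.valid → (∀ p ∈ t.impls, p.1.Nonempty) →
    (∀ p ∈ t.impls, p.1 ⊆ A ∨ Disjoint p.1 A) →
    ∀ t', t.restrict A = some t' →
      t'.elems = t.elems ∩ A ∧
      t'.impls = t.impls.filter (fun p => p.1 ⊆ A ∧ p.2 ∈ A) ∧
      t'.valid := by
  intro t
  induction t with
  | leafElem v =>
      intro _ _ _ t' ht'
      by_cases hv : v ∈ A
      · simp only [HTree.restrict, if_pos hv, Option.some.injEq] at ht'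
        subst ht'
        refine ⟨?_, ?_, trivial⟩
        · show ({v} : Finset α) = {v} ∩ A
          exact (Finset.inter_eq_left.mpr (Finset.singleton_subset_iff.mpr hv)).symm
        · simp [HTree.impls]
      · simp [HTree.restrict, hv] at ht'
  | leafFactor V J =>
      intro hv hne hc t' ht'
      by_cases hVA : (V ∩ A).Nonempty
      · simp only [HTree.restrict, if_pos hVA, Option.some.injEq] at ht'
        subst ht'
        have hsub : V ⊆ A := factor_side J V A hv.2.2 hc hVA
        refine ⟨?_, ?_, hv⟩
        · simp [HTree.elems, Finset.inter_eq_left.mpr hsub]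
        · simp only [HTree.impls]
          symm
          rw [Finset.filter_eq_self]
          intro p hp
          obtain ⟨h1, h2, -⟩ := hv.2.1 p hp
          exact ⟨h1.trans hsub, hsub h2⟩
      · simp [HTree.restrict, hVA] at ht'
  | node l r lab ihl ihr =>
      intro hv hne hc t' ht'
      obtain ⟨hdisj, hcross, hlabd, hlrd, hvl, hvr⟩ := hv
      have hml : ∀ p ∈ l.impls, p ∈ (HTree.node l r lab).impls := by
        intro p hp; simp [HTree.impls]; tauto
      have hmr : ∀ p ∈ r.impls, p ∈ (HTree.node l r lab).impls := by
        intro p hp; simp [HTree.impls]; tauto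
      have hmlab : ∀ p ∈ lab, p ∈ (HTree.node l r lab).impls := by
        intro p hp; simp [HTree.impls]; tauto
      simp only [HTree.restrict] at ht'
      have hlabempty : (l.restrict A = none ∨ r.restrict A = none) →
          lab.filter (fun p => p.1 ⊆ A ∧ p.2 ∈ A) = ∅ := by
        intro hnone
        rw [Finset.filter_eq_empty_iff]
        rintro p hp ⟨h1, h2⟩
        rcases hcross p hp with ⟨ha, hb⟩ | ⟨ha, hb⟩ <;> rcases hnone with hn | hn
        · obtain ⟨x, hx⟩ := hne p (hmlab p hp)
          exact HTree.restrict_eq_none A l hn x (ha hx) (h1 hx)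
        · exact HTree.restrict_eq_none A r hn p.2 hb h2
        · exact HTree.restrict_eq_none A l hn p.2 hb h2
        · obtain ⟨x, hx⟩ := hne p (hmlab p hp)
          exact HTree.restrict_eq_none A r hn x (ha hx) (h1 hx)
      have himplsempty : ∀ s : HTree α, s.valid → s.restrict A = none →
          (∀ p ∈ s.impls, p.1.Nonempty) →
          s.impls.filter (fun p => p.1 ⊆ A ∧ p.2 ∈ A) = ∅ := by
        intro s hsv hsn hsne
        rw [Finset.filter_eq_empty_iff]
        rintro p hp ⟨h1, -⟩
        obtain ⟨x, hx⟩ := hsne p hp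
        exact HTree.restrict_eq_none A s hsn x
          ((HTree.valid_baseOver s hsv p hp).1 hx) (h1 hx)
      cases hl : l.restrict A with
      | none =>
          cases hr : r.restrict A with
          | none => simp [hl, hr] at ht'
          | some rr =>
              simp only [hl, hr, Option.some.injEq] at ht'
              subst ht'
              obtain ⟨he, hi, hvv⟩ := ihr hvr (fun p hp => hne p (hmr p hp))
                (fun p hp => hc p (hmr p hp)) rr hr
              refine ⟨?_, ?_, hvv⟩
              · have hle : l.elems ∩ A = ∅ := by
                  rw [Finset.eq_empty_iff_forall_notMem]
                  intro x hx
                  rw [Finset.mem_inter] at hx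
                  exact HTree.restrict_eq_none A l hl x hx.1 hx.2
                simp [HTree.elems, Finset.union_inter_distrib_right, hle, he]
              · simp only [HTree.impls, Finset.filter_union]
                rw [hlabempty (Or.inl hl),
                  himplsempty l hvl hl (fun p hp => hne p (hml p hp)), hi]
                simp
      | some ll =>
          obtain ⟨hel, hil, hvll⟩ := ihl hvl (fun p hp => hne p (hml p hp))
            (fun p hp => hc p (hml p hp)) ll hl
          cases hr : r.restrict A with
          | none =>
              simp only [hl, hr, Option.some.injEq] at ht'
              subst ht'
              refine ⟨?_, ?_, hvll⟩
              · have hre : r.elems ∩ A = ∅ := by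
                  rw [Finset.eq_empty_iff_forall_notMem]
                  intro x hx
                  rw [Finset.mem_inter] at hx
                  exact HTree.restrict_eq_none A r hr x hx.1 hx.2
                simp [HTree.elems, Finset.union_inter_distrib_right, hre, hel]
              · simp only [HTree.impls, Finset.filter_union]
                rw [hlabempty (Or.inr hr),
                  himplsempty r hvr hr (fun p hp => hne p (hmr p hp)), hil]
                simp
          | some rr =>
              obtain ⟨her, hir, hvrr⟩ := ihr hvr (fun p hp => hne p (hmr p hp))
                (fun p hp => hc p (hmr p hp)) rr hr
              simp only [hl, hr, Option.some.injEq] at ht'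
              subst ht'
              refine ⟨?_, ?_, ?_⟩
              · simp [HTree.elems, Finset.union_inter_distrib_right, hel, her]
              · simp only [HTree.impls, Finset.filter_union, hil, hir]
              · refine ⟨?_, ?_, ?_, ?_, hvll, hvrr⟩
                · rw [hel, her]
                  exact hdisj.mono Finset.inter_subset_left Finset.inter_subset_left
                · intro p hp
                  rw [Finset.mem_filter] at hp
                  obtain ⟨hp, h1, h2⟩ := hp
                  rcases hcross p hp with ⟨ha, hb⟩ | ⟨ha, hb⟩
                  · exact Or.inl ⟨by rw [hel]; exact Finset.subset_inter ha h1,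
                      by rw [her]; exact Finset.mem_inter.mpr ⟨hb, h2⟩⟩
                  · exact Or.inr ⟨by rw [her]; exact Finset.subset_inter ha h1,
                      by rw [hel]; exact Finset.mem_inter.mpr ⟨hb, h2⟩⟩
                · rw [hil, hir]
                  refine Finset.disjoint_union_right.mpr ⟨?_, ?_⟩
                  · exact (Finset.disjoint_union_right.mp hlabd).1.mono
                      (Finset.filter_subset _ _) (Finset.filter_subset _ _)
                  · exact (Finset.disjoint_union_right.mp hlabd).2.mono
                      (Finset.filter_subset _ _) (Finset.filter_subset _ _)
                · rw [hil, hir]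
                  exact hlrd.mono (Finset.filter_subset _ _) (Finset.filter_subset _ _)

/-- Leaf labels of the restriction (empty multiset if it vanishes). -/
def restrictLabels (A : Finset α) (t : HTree α) :
    Multiset (α ⊕ (Finset α × Finset (Finset α × α))) :=
  (t.restrict A).elim 0 HTree.leafLabels

theorem restrictLabels_node (A : Finset α) (l r : HTree α)
    (lab : Finset (Finset α × α)) :
    restrictLabels A (HTree.node l r lab) = restrictLabels A l + restrictLabels A r := by
  cases hl : l.restrict A <;> cases hr : r.restrict A <;>
    simp [restrictLabels, HTree.restrict, hl, hr, HTree.leafLabels]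

theorem labels_partition (A B : Finset α) :
    ∀ t : HTree α, t.valid →
    (∀ p ∈ t.impls, p.1 ⊆ A ∨ Disjoint p.1 A) →
    (∀ p ∈ t.impls, p.1 ⊆ B ∨ Disjoint p.1 B) →
    Disjoint A B → t.elems ⊆ A ∪ B →
    restrictLabels A t + restrictLabels B t = t.leafLabels := by
  intro t
  induction t with
  | leafElem v =>
      intro _ _ _ hAB hcov
      have hv : v ∈ A ∪ B := hcov (by simp [HTree.elems])
      rw [Finset.mem_union] at hv
      rcases hv with hv | hv
      · have : v ∉ B := Finset.disjoint_left.mp hAB hv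
        simp [restrictLabels, HTree.restrict, hv, this, HTree.leafLabels]
      · have : v ∉ A := Finset.disjoint_right.mp hAB hv
        simp [restrictLabels, HTree.restrict, hv, this, HTree.leafLabels]
  | leafFactor V J =>
      intro hval hcA hcB hAB hcov
      have hVne : V.Nonempty := Finset.card_pos.mp (by have := hval.1; omega)
      obtain ⟨x, hx⟩ := hVne
      have hx' : x ∈ A ∪ B := hcov (by simpa [HTree.elems] using hx)
      rw [Finset.mem_union] at hx'
      rcases hx' with hxA | hxB
      · have hVA : V ⊆ A := factor_side J V A hval.2.2 hcA
          ⟨x, Finset.mem_inter.mpr ⟨hx, hxA⟩⟩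
        have hVB : ¬ (V ∩ B).Nonempty := by
          rintro ⟨y, hy⟩
          rw [Finset.mem_inter] at hy
          exact Finset.disjoint_left.mp hAB (hVA hy.1) hy.2
        have hVAne : (V ∩ A).Nonempty := ⟨x, Finset.mem_inter.mpr ⟨hx, hxA⟩⟩
        simp [restrictLabels, HTree.restrict, hVAne, hVB, HTree.leafLabels]
      · have hVB : V ⊆ B := factor_side J V B hval.2.2 hcB
          ⟨x, Finset.mem_inter.mpr ⟨hx, hxB⟩⟩
        have hVA : ¬ (V ∩ A).Nonempty := by
          rintro ⟨y, hy⟩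
          rw [Finset.mem_inter] at hy
          exact Finset.disjoint_right.mp hAB (hVB hy.1) hy.2
        have hVBne : (V ∩ B).Nonempty := ⟨x, Finset.mem_inter.mpr ⟨hx, hxB⟩⟩
        simp [restrictLabels, HTree.restrict, hVA, hVBne, HTree.leafLabels]
  | node l r lab ihl ihr =>
      intro hval hcA hcB hAB hcov
      obtain ⟨-, -, -, -, hvl, hvr⟩ := hval
      have hml : ∀ p ∈ l.impls, p ∈ (HTree.node l r lab).impls := by
        intro p hp; simp [HTree.impls]; tauto
      have hmr : ∀ p ∈ r.impls, p ∈ (HTree.node l r lab).impls := by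
        intro p hp; simp [HTree.impls]; tauto
      have hcovl : l.elems ⊆ A ∪ B :=
        fun x hx => hcov (by simp [HTree.elems]; exact Or.inl hx)
      have hcovr : r.elems ⊆ A ∪ B :=
        fun x hx => hcov (by simp [HTree.elems]; exact Or.inr hx)
      rw [restrictLabels_node, restrictLabels_node]
      have h1 := ihl hvl (fun p hp => hcA p (hml p hp))
        (fun p hp => hcB p (hml p hp)) hAB hcovl
      have h2 := ihr hvr (fun p hp => hcA p (hmr p hp))
        (fun p hp => hcB p (hmr p hp)) hAB hcovr
      rw [show (HTree.node l r lab).leafLabels = l.leafLabels + r.leafLabels from rfl,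
        ← h1, ← h2]
      exact add_add_add_comm _ _ _ _

theorem node_case {n : ℕ}
    (IH : ∀ t₁ t₂ : HTree α, t₁.elems.card ≤ n → t₁.valid → t₂.valid →
      t₁.elems = t₂.elems → t₁.impls = t₂.impls →
      (∀ p ∈ t₁.impls, p.1.Nonempty) → t₁.leafLabels = t₂.leafLabels)
    (l r : HTree α) (lab : Finset (Finset α × α)) (t₂ : HTree α)
    (hcard : (HTree.node l r lab).elems.card ≤ n + 1)
    (hv1 : (HTree.node l r lab).valid) (hv2 : t₂.valid)
    (he : (HTree.node l r lab).elems = t₂.elems)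
    (hi : (HTree.node l r lab).impls = t₂.impls)
    (hne : ∀ p ∈ (HTree.node l r lab).impls, p.1.Nonempty) :
    (HTree.node l r lab).leafLabels = t₂.leafLabels := by
  obtain ⟨hdisj, hcross, -, -, hvl, hvr⟩ := hv1
  set A := l.elems with hA
  set B := r.elems with hB
  have hml : ∀ p ∈ l.impls, p ∈ (HTree.node l r lab).impls := by
    intro p hp; simp [HTree.impls]; tauto
  have hmr : ∀ p ∈ r.impls, p ∈ (HTree.node l r lab).impls := by
    intro p hp; simp [HTree.impls]; tauto
  have hmlab : ∀ p ∈ lab, p ∈ (HTree.node l r lab).impls := by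
    intro p hp; simp [HTree.impls]; tauto
  have hsplit : ∀ p ∈ (HTree.node l r lab).impls, p.1 ⊆ A ∨ p.1 ⊆ B := by
    intro p hp
    simp only [HTree.impls, Finset.mem_union] at hp
    rcases hp with (hp | hp) | hp
    · rcases hcross p hp with ⟨h1, -⟩ | ⟨h1, -⟩
      exacts [Or.inl h1, Or.inr h1]
    · exact Or.inl (HTree.valid_baseOver l hvl p hp).1
    · exact Or.inr (HTree.valid_baseOver r hvr p hp).1
  have hcA : ∀ p ∈ t₂.impls, p.1 ⊆ A ∨ Disjoint p.1 A := by
    intro p hp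
    rcases hsplit p (hi ▸ hp) with h | h
    · exact Or.inl h
    · exact Or.inr (hdisj.symm.mono_left h)
  have hcB : ∀ p ∈ t₂.impls, p.1 ⊆ B ∨ Disjoint p.1 B := by
    intro p hp
    rcases hsplit p (hi ▸ hp) with h | h
    · exact Or.inr (hdisj.mono_left h)
    · exact Or.inl h
  have hne2 : ∀ p ∈ t₂.impls, p.1.Nonempty := fun p hp => hne p (hi ▸ hp)
  have hAsub : A ⊆ t₂.elems := by
    rw [← he]; exact Finset.subset_union_left
  have hBsub : B ⊆ t₂.elems := by
    rw [← he]; exact Finset.subset_union_right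
  have hAne : A.Nonempty := HTree.valid_elems_nonempty l hvl
  have hBne : B.Nonempty := HTree.valid_elems_nonempty r hvr
  -- the restrictions exist
  have hrestr : ∀ (C : Finset α), C.Nonempty → C ⊆ t₂.elems →
      ∃ c, t₂.restrict C = some c := by
    intro C hCne hCsub
    cases hc : t₂.restrict C with
    | none =>
        obtain ⟨x, hx⟩ := hCne
        exact absurd hx (HTree.restrict_eq_none C t₂ hc x (hCsub hx))
    | some c => exact ⟨c, rfl⟩
  obtain ⟨a, ha⟩ := hrestr A hAne hAsub
  obtain ⟨b, hb⟩ := hrestr B hBne hBsub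
  obtain ⟨hea, hia, hva⟩ := HTree.restrict_spec A t₂ hv2 hne2 hcA a ha
  obtain ⟨heb, hib, hvb⟩ := HTree.restrict_spec B t₂ hv2 hne2 hcB b hb
  have heaA : a.elems = A := by rw [hea, Finset.inter_eq_right.mpr hAsub]
  have hebB : b.elems = B := by rw [heb, Finset.inter_eq_right.mpr hBsub]
  -- impls of the restrictions are the children impls
  have hfiltl : t₂.impls.filter (fun p => p.1 ⊆ A ∧ p.2 ∈ A) = l.impls := by
    rw [← hi]
    simp only [HTree.impls, Finset.filter_union]
    have e1 : lab.filter (fun p => p.1 ⊆ A ∧ p.2 ∈ A) = ∅ := by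
      rw [Finset.filter_eq_empty_iff]
      rintro p hp ⟨h1, h2⟩
      rcases hcross p hp with ⟨-, hb'⟩ | ⟨ha', -⟩
      · exact Finset.disjoint_right.mp hdisj hb' h2
      · obtain ⟨x, hx⟩ := hne p (hmlab p hp)
        exact Finset.disjoint_left.mp hdisj (h1 hx) (ha' hx)
    have e2 : l.impls.filter (fun p => p.1 ⊆ A ∧ p.2 ∈ A) = l.impls := by
      rw [Finset.filter_eq_self]
      intro p hp
      exact HTree.valid_baseOver l hvl p hp
    have e3 : r.impls.filter (fun p => p.1 ⊆ A ∧ p.2 ∈ A) = ∅ := by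
      rw [Finset.filter_eq_empty_iff]
      rintro p hp ⟨h1, -⟩
      obtain ⟨x, hx⟩ := hne p (hmr p hp)
      exact Finset.disjoint_left.mp hdisj (h1 hx)
        ((HTree.valid_baseOver r hvr p hp).1 hx)
    rw [e1, e2, e3]
    simp
  have hfiltr : t₂.impls.filter (fun p => p.1 ⊆ B ∧ p.2 ∈ B) = r.impls := by
    rw [← hi]
    simp only [HTree.impls, Finset.filter_union]
    have e1 : lab.filter (fun p => p.1 ⊆ B ∧ p.2 ∈ B) = ∅ := by
      rw [Finset.filter_eq_empty_iff]
      rintro p hp ⟨h1, h2⟩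
      rcases hcross p hp with ⟨ha', -⟩ | ⟨-, hb'⟩
      · obtain ⟨x, hx⟩ := hne p (hmlab p hp)
        exact Finset.disjoint_left.mp hdisj (ha' hx) (h1 hx)
      · exact Finset.disjoint_left.mp hdisj hb' h2
    have e2 : l.impls.filter (fun p => p.1 ⊆ B ∧ p.2 ∈ B) = ∅ := by
      rw [Finset.filter_eq_empty_iff]
      rintro p hp ⟨h1, -⟩
      obtain ⟨x, hx⟩ := hne p (hml p hp)
      exact Finset.disjoint_left.mp hdisj
        ((HTree.valid_baseOver l hvl p hp).1 hx) (h1 hx)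
    have e3 : r.impls.filter (fun p => p.1 ⊆ B ∧ p.2 ∈ B) = r.impls := by
      rw [Finset.filter_eq_self]
      intro p hp
      exact HTree.valid_baseOver r hvr p hp
    rw [e1, e2, e3]
    simp
  -- cardinality bounds
  have hcardAB : A.card + B.card = (HTree.node l r lab).elems.card := by
    rw [show (HTree.node l r lab).elems = A ∪ B from rfl]
    exact (Finset.card_union_of_disjoint hdisj).symm
  have hAcard : A.card ≤ n := by
    have := hBne.card_pos
    omega
  have hBcard : B.card ≤ n := by
    have := hAne.card_pos
    omega
  -- apply the inductive hypothesis
  have hLa : l.leafLabels = a.leafLabels := by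
    refine IH l a (by rw [← hA]; exact hAcard) hvl hva ?_ ?_
      (fun p hp => hne p (hml p hp))
    · rw [heaA]
    · rw [hia, hfiltl]
  have hRb : r.leafLabels = b.leafLabels := by
    refine IH r b (by rw [← hB]; exact hBcard) hvr hvb ?_ ?_
      (fun p hp => hne p (hmr p hp))
    · rw [hebB]
    · rw [hib, hfiltr]
  -- assemble
  have hpart := labels_partition A B t₂ hv2 hcA hcB hdisj
    (by rw [← he]; exact Finset.Subset.refl _)
  rw [show (HTree.node l r lab).leafLabels = l.leafLabels + r.leafLabels from rfl,
    hLa, hRb, ← hpart]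
  simp [restrictLabels, ha, hb]

theorem labels_eq : ∀ n : ℕ, ∀ t₁ t₂ : HTree α, t₁.elems.card ≤ n →
    t₁.valid → t₂.valid → t₁.elems = t₂.elems → t₁.impls = t₂.impls →
    (∀ p ∈ t₁.impls, p.1.Nonempty) → t₁.leafLabels = t₂.leafLabels := by
  intro n
  induction n with
  | zero =>
      intro t₁ t₂ hcard hv1 _ _ _ _
      have := (HTree.valid_elems_nonempty t₁ hv1).card_pos
      omega
  | succ n IH =>
      intro t₁ t₂ hcard hv1 hv2 he hi hne
      cases t₁ with
      | node l r lab => exact node_case IH l r lab t₂ hcard hv1 hv2 he hi hne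
      | leafElem v =>
          cases t₂ with
          | node l r lab =>
              refine (node_case IH l r lab (HTree.leafElem v) ?_ hv2 hv1
                he.symm hi.symm ?_).symm
              · rw [← he]; exact hcard
              · intro p hp; exact hne p (hi ▸ hp)
          | leafElem w =>
              have : v = w := by
                have : ({v} : Finset α) = {w} := he
                simpa using this
              rw [this]
          | leafFactor V J =>
              exfalso
              have h2 : 2 ≤ V.card := hv2.1
              have : ({v} : Finset α) = V := he
              rw [← this] at h2
              simp at h2
      | leafFactor V J =>
          cases t₂ with
          | node l r lab =>
              refine (node_case IH l r lab (HTree.leafFactor V J) ?_ hv2 hv1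
                he.symm hi.symm ?_).symm
              · rw [← he]; exact hcard
              · intro p hp; exact hne p (hi ▸ hp)
          | leafElem w =>
              exfalso
              have h2 : 2 ≤ V.card := hv1.1
              have : V = ({w} : Finset α) := he
              rw [this] at h2
              simp at h2
          | leafFactor V' J' =>
              have h1 : V = V' := he
              have h2 : J = J' := hi
              simp [HTree.leafLabels, h1, h2]

/-- any two decomposition trees of the same implicational base
have the same number of leaves and the same multiset of leaf labels; the
irreducible H-factors are independent of the tree. -/
theorem hfactors_unique (I : Finset (Finset α × α)) (U : Finset α)
    (hI : BaseOver I U) (t₁ t₂ : HTree α)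
    (h₁ : t₁.valid ∧ t₁.elems = U ∧ t₁.impls = I)
    (h₂ : t₂.valid ∧ t₂.elems = U ∧ t₂.impls = I) :
    Multiset.card t₁.leafLabels = Multiset.card t₂.leafLabels ∧
    t₁.leafLabels = t₂.leafLabels := by
  have h := labels_eq t₁.elems.card t₁ t₂ le_rfl h₁.1 h₂.1
    (h₁.2.1.trans h₂.2.1.symm) (h₁.2.2.trans h₂.2.2.symm)
    (fun p hp => (hI p (h₁.2.2 ▸ hp)).2.2)
  exact ⟨by rw [h], h⟩
end
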